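/- arXiv:2005.13782 — 18 statements merged into one kernel-verified Lean document; each statement's English description precedes it below -/
import Mathlib

section
/- Let R be a ring, let a, y ∈ R and let k ≥ 1 be an integer such that a*y² = y and y*a^(k+1) = a^k. Then: (i) a*y = a^m * y^m for every integer m ≥ 1; (ii) y*a*y = y; (iii) the element d := y^(k+1) * a^k satisfies d*a*d = d, a*d = d*a and d*a^(k+1) = a^k (i.e., d is a Drazin inverse of a with index at most k); (iv) a^m * y^m * a^m = a^m for every integer m ≥ k; (v) there exist s, t ∈ R with y = a^k * s and a^k = y * t (i.e., yR = a^k R). -/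
/-- basic consequences of `a*y² = y` and `y*a^(k+1) = a^k` in a ring. -/
theorem stmt_0 {R : Type*} [Ring R] (a y : R) (k : ℕ) (hk : 1 ≤ k)
    (h1 : a * y ^ 2 = y) (h2 : y * a ^ (k + 1) = a ^ k) :
    (∀ m : ℕ, 1 ≤ m → a * y = a ^ m * y ^ m) ∧
    y * a * y = y ∧
    ((y ^ (k + 1) * a ^ k) * a * (y ^ (k + 1) * a ^ k) = y ^ (k + 1) * a ^ k ∧
      a * (y ^ (k + 1) * a ^ k) = (y ^ (k + 1) * a ^ k) * a ∧
      (y ^ (k + 1) * a ^ k) * a ^ (k + 1) = a ^ k) ∧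
    (∀ m : ℕ, k ≤ m → a ^ m * y ^ m * a ^ m = a ^ m) ∧
    (∃ s t : R, y = a ^ k * s ∧ a ^ k = y * t) := by
  -- L1 : a * y^(j+2) = y^(j+1)
  have L1 : ∀ j : ℕ, a * y ^ (j + 2) = y ^ (j + 1) := by
    intro j
    calc a * y ^ (j + 2) = (a * y ^ 2) * y ^ j := by
          rw [mul_assoc, ← pow_add]; ring_nf
      _ = y ^ (j + 1) := by rw [h1, ← pow_succ']
  -- L2 : a^j * y^(j+1) = y
  have L2 : ∀ j : ℕ, a ^ j * y ^ (j + 1) = y := by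
    intro j
    induction j with
    | zero => simp
    | succ n ih =>
      have : a ^ (n + 1) * y ^ (n + 2) = a ^ n * (a * y ^ (n + 2)) := by
        rw [pow_succ, mul_assoc]
      rw [this, L1 n, ih]
  -- L3 : y^j * a^(k+j) = a^k
  have L3 : ∀ j : ℕ, y ^ j * a ^ (k + j) = a ^ k := by
    intro j
    induction j with
    | zero => simp
    | succ n ih =>
      have e1 : y ^ (n + 1) = y ^ n * y := pow_succ y n
      have e2 : a ^ (k + (n + 1)) = a ^ (k + 1) * a ^ n := by
        rw [← pow_add]; ring_nf
      calc y ^ (n + 1) * a ^ (k + (n + 1))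
          = y ^ n * (y * a ^ (k + 1)) * a ^ n := by
            rw [e1, e2]; noncomm_ring
        _ = y ^ n * a ^ (k + n) := by rw [h2, mul_assoc, ← pow_add]
        _ = a ^ k := ih
  -- (i)
  have hi : ∀ m : ℕ, 1 ≤ m → a * y = a ^ m * y ^ m := by
    intro m hm
    induction m with
    | zero => omega
    | succ n ih =>
      rcases Nat.eq_zero_or_pos n with hn | hn
      · subst hn; simp
      · obtain ⟨p, rfl⟩ : ∃ p, n = p + 1 := ⟨n - 1, by omega⟩
        have : a ^ (p + 2) * y ^ (p + 2) = a ^ (p + 1) * (a * y ^ (p + 2)) := by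
          rw [pow_succ, mul_assoc]
        rw [this, L1 p, ← ih (by omega)]
  -- (ii)
  have hii : y * a * y = y := by
    have step : y * a * (a ^ k * y ^ (k + 1)) = y := by
      calc y * a * (a ^ k * y ^ (k + 1)) = y * (a * a ^ k) * y ^ (k + 1) := by
            noncomm_ring
        _ = (y * a ^ (k + 1)) * y ^ (k + 1) := by rw [← pow_succ']
        _ = a ^ k * y ^ (k + 1) := by rw [h2]
        _ = y := L2 k
    rwa [L2 k] at step
  -- ad = da = y^k a^k
  have hda : y ^ (k + 1) * a ^ k * a = y ^ k * a ^ k := by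
    calc y ^ (k + 1) * a ^ k * a = y ^ k * (y * a ^ (k + 1)) := by
          rw [pow_succ, pow_succ]; noncomm_ring
      _ = y ^ k * a ^ k := by rw [h2]
  have had : a * (y ^ (k + 1) * a ^ k) = y ^ k * a ^ k := by
    obtain ⟨p, rfl⟩ : ∃ p, k = p + 1 := ⟨k - 1, by omega⟩
    rw [← mul_assoc, L1 p]
  -- d a^(k+1) = a^k
  have hdk : (y ^ (k + 1) * a ^ k) * a ^ (k + 1) = a ^ k := by
    calc (y ^ (k + 1) * a ^ k) * a ^ (k + 1) = y ^ (k + 1) * a ^ (k + (k + 1)) := by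
          rw [mul_assoc, ← pow_add]
      _ = a ^ k := L3 (k + 1)
  -- d a d = d
  have hdad : (y ^ (k + 1) * a ^ k) * a * (y ^ (k + 1) * a ^ k) = y ^ (k + 1) * a ^ k := by
    rw [hda]
    calc y ^ k * a ^ k * (y ^ (k + 1) * a ^ k)
        = y ^ k * (a ^ k * y ^ (k + 1)) * a ^ k := by noncomm_ring
      _ = y ^ k * y * a ^ k := by rw [L2 k]
      _ = y ^ (k + 1) * a ^ k := by rw [← pow_succ]
  -- (iv)
  have hiv : ∀ m : ℕ, k ≤ m → a ^ m * y ^ m * a ^ m = a ^ m := by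
    intro m hm
    obtain ⟨p, rfl⟩ := Nat.exists_eq_add_of_le hm
    have h4 : a * y * a ^ k = a ^ k := by
      calc a * y * a ^ k = a * y * (y * a ^ (k + 1)) := by rw [h2]
        _ = (a * y ^ 2) * a ^ (k + 1) := by noncomm_ring
        _ = a ^ k := by rw [h1, h2]
    calc a ^ (k + p) * y ^ (k + p) * a ^ (k + p)
        = (a * y) * a ^ (k + p) := by rw [← hi (k + p) (by omega)]
      _ = (a * y * a ^ k) * a ^ p := by rw [pow_add]; noncomm_ring
      _ = a ^ (k + p) := by rw [h4, ← pow_add]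
  exact ⟨hi, hii, ⟨hdad, by rw [had, hda], hdk⟩, hiv,
    ⟨y ^ (k + 1), a ^ (k + 1), (L2 k).symm, h2.symm⟩⟩
end

section
/- Let R be a ring, let a, d ∈ R, let k ≥ 1 be an integer, and suppose d is a central Drazin inverse of a with index at most k. Then for every integer m ≥ k, the element d^m is a group inverse of a^m; that is, a^m * d^m * a^m = a^m, d^m * a^m * d^m = d^m, and a^m * d^m = d^m * a^m. -/
/-- if `d` is a central Drazin inverse of `a` with index at most `k`,
then `d^m` is a group inverse of `a^m` for every `m ≥ k`. -/
theorem stmt_2 {R : Type*} [Ring R] (a d : R) (k : ℕ) (hk : 1 ≤ k)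
    (hc : ∀ t : R, (d * a) * t = t * (d * a))
    (h1 : d * a * d = d) (h2 : a ^ (k + 1) * d = a ^ k) :
    ∀ m : ℕ, k ≤ m →
      a ^ m * d ^ m * a ^ m = a ^ m ∧
      d ^ m * a ^ m * d ^ m = d ^ m ∧
      a ^ m * d ^ m = d ^ m * a ^ m := by
  -- Step lemma: a^(m+1) * d = a^m for m ≥ k
  have hstep : ∀ m : ℕ, k ≤ m → a ^ (m + 1) * d = a ^ m := by
    intro m hm
    obtain ⟨n, rfl⟩ := Nat.exists_eq_add_of_le hm
    calc a ^ (k + n + 1) * d = a ^ n * (a ^ (k + 1) * d) := by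
          rw [show k + n + 1 = n + (k + 1) by ring, pow_add, mul_assoc]
      _ = a ^ n * a ^ k := by rw [h2]
      _ = a ^ (k + n) := by rw [← pow_add, Nat.add_comm]
  -- Commutation: a^m * d = d * a^m for m ≥ k
  have hcom : ∀ m : ℕ, k ≤ m → a ^ m * d = d * a ^ m := by
    intro m hm
    calc a ^ m * d = a ^ m * (d * a * d) := by rw [h1]
      _ = (d * a) * a ^ m * d := by
          rw [← mul_assoc, ← hc (a ^ m)]
      _ = d * (a ^ (m + 1) * d) := by
          rw [pow_succ']; noncomm_ring
      _ = d * a ^ m := by rw [hstep m hm]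
  -- d^m * a^m = d * a for m ≥ 1
  have hda : ∀ m : ℕ, 1 ≤ m → d ^ m * a ^ m = d * a := by
    intro m hm
    induction m with
    | zero => omega
    | succ n ih =>
      rcases Nat.eq_or_lt_of_le hm with h | h
      · simp [← h]
      · have hn : 1 ≤ n := by omega
        calc d ^ (n + 1) * a ^ (n + 1) = d ^ n * ((d * a) * a ^ n) := by
              rw [pow_succ d, pow_succ' a]; noncomm_ring
          _ = d ^ n * (a ^ n * (d * a)) := by rw [hc (a ^ n)]
          _ = (d ^ n * a ^ n) * (d * a) := by rw [mul_assoc]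
          _ = (d * a) * (d * a) := by rw [ih hn]
          _ = d * a := by rw [← mul_assoc, h1]
  -- (d*a) * d^m = d^m for m ≥ 1
  have hdd : ∀ m : ℕ, 1 ≤ m → (d * a) * d ^ m = d ^ m := by
    intro m hm
    obtain ⟨n, rfl⟩ := Nat.exists_eq_add_of_le hm
    calc (d * a) * d ^ (1 + n) = ((d * a) * d) * d ^ n := by
          rw [show (1 : ℕ) + n = n + 1 by ring, pow_succ']; noncomm_ring
      _ = d * d ^ n := by rw [h1]
      _ = d ^ (1 + n) := by rw [show (1 : ℕ) + n = n + 1 by ring, pow_succ']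
  intro m hm
  have hm1 : 1 ≤ m := hk.trans hm
  have hcd : Commute (a ^ m) d := hcom m hm
  have hcm : a ^ m * d ^ m = d ^ m * a ^ m := (hcd.pow_right m).eq
  refine ⟨?_, ?_, hcm⟩
  · calc a ^ m * d ^ m * a ^ m = a ^ m * (d ^ m * a ^ m) := by rw [mul_assoc]
      _ = a ^ m * (d * a) := by rw [hda m hm1]
      _ = (d * a) * a ^ m := by rw [hc (a ^ m)]
      _ = d * a ^ (m + 1) := by rw [pow_succ']; noncomm_ring
      _ = a ^ (m + 1) * d := (hcom (m + 1) (by omega)).symm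
      _ = a ^ m := hstep m hm
  · calc d ^ m * a ^ m * d ^ m = (d * a) * d ^ m := by rw [hda m hm1]
      _ = d ^ m := hdd m hm1
end

section
/- Let R be a proper *-ring, let a ∈ R, and let k ≥ 1 be an integer. If x and y are both weak core inverses of a with index at most k, then x = y. -/
private lemma pow_rep {R : Type*} [Ring R] (a x : R) (h : a * x ^ 2 = x) :
    ∀ n : ℕ, a ^ n * x ^ (n + 1) = x := by
  intro n
  induction n with
  | zero => simp
  | succ n ih =>
    have hx : x ^ (n + 1 + 1) = x ^ 2 * x ^ n := by
      rw [← pow_add]; ring_nf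
    calc a ^ (n + 1) * x ^ (n + 1 + 1)
        = a ^ n * (a * x ^ 2) * x ^ n := by
          rw [pow_succ, hx]; noncomm_ring
      _ = a ^ n * x ^ (n + 1) := by rw [h, pow_succ', mul_assoc]
      _ = x := ih

/-- uniqueness of the weak core inverse in a proper *-ring. -/
theorem stmt_3 {R : Type*} [Ring R] [StarRing R]
    (hProper : ∀ r : R, star r * r = 0 → r = 0)
    (a x y : R) (k : ℕ) (hk : 1 ≤ k)
    (hx1 : x * a ^ (k + 1) = a ^ k) (hx2 : a * x ^ 2 = x)
    (hx3 : star (a ^ k) * a * x = star (a ^ k))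
    (hy1 : y * a ^ (k + 1) = a ^ k) (hy2 : a * y ^ 2 = y)
    (hy3 : star (a ^ k) * a * y = star (a ^ k)) :
    x = y := by
  have hxrep : a ^ k * x ^ (k + 1) = x := pow_rep a x hx2 k
  have hyrep : a ^ k * y ^ (k + 1) = y := pow_rep a y hy2 k
  -- a*x = a^(k+1) * x^(k+1), similarly for y
  have hax : a * x = a ^ (k + 1) * x ^ (k + 1) := by
    rw [pow_succ', mul_assoc, hxrep]
  have hay : a * y = a ^ (k + 1) * y ^ (k + 1) := by
    rw [pow_succ', mul_assoc, hyrep]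
  -- step 2 : a*x = a*y
  have hd0 : star (a ^ k) * (a * x - a * y) = 0 := by
    rw [mul_sub, ← mul_assoc, ← mul_assoc, hx3, hy3, sub_self]
  have hd1 : star (a ^ (k + 1)) * (a * x - a * y) = 0 := by
    rw [pow_succ, star_mul, mul_assoc, hd0, mul_zero]
  have hstar : star (a * x - a * y) * (a * x - a * y) = 0 := by
    have hrw : a * x - a * y = a ^ (k + 1) * (x ^ (k + 1) - y ^ (k + 1)) := by
      rw [mul_sub, ← hax, ← hay]
    calc star (a * x - a * y) * (a * x - a * y)
        = star (x ^ (k + 1) - y ^ (k + 1)) *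
            (star (a ^ (k + 1)) * (a * x - a * y)) := by
          nth_rewrite 1 [hrw]
          rw [star_mul, mul_assoc]
      _ = 0 := by rw [hd1, mul_zero]
  have haxy : a * x = a * y := by
    have := hProper _ hstar
    exact sub_eq_zero.mp this
  -- step 3
  have hxax : x * (a * x) = x := by
    rw [hax, ← mul_assoc, hx1, hxrep]
  have hyay : y * (a * y) = y := by
    rw [hay, ← mul_assoc, hy1, hyrep]
  have hyax : y * (a * x) = y := by rw [haxy, hyay]
  have : x - y = (x - y) * (a * x) := by
    rw [sub_mul, hxax, hyax]
  have hz : x - y = 0 := by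
    rw [this, hax, ← mul_assoc, sub_mul, hx1, hy1, sub_self, zero_mul]
  exact sub_eq_zero.mp hz
end

section
/- Let R be a proper *-ring, let a, y ∈ R, and let k ≥ 1 be an integer. Write xR = {x*r : r ∈ R} and °x = {z ∈ R : z*x = 0} for x ∈ R. Then the following assertions are equivalent: (i) y is a weak core inverse of a with index at most k; (ii) y = y*a*y, yR = a^k R = a^(k+1) R, and a^k R ⊆ y* R; (iii) y = y*a*y, yR = a^k R ⊆ a^(k+1) R, and °(y*) ⊆ °(a^k); (iv) y = y*a*y, °(a^(k+1)) ⊆ °(a^k) = °y, and °(y*) ⊆ °(a^k). -/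
/-- The set `xR = {x*r : r ∈ R}`. -/
def rightIdealOf {R : Type*} [Ring R] (x : R) : Set R := {z | ∃ r : R, z = x * r}

/-- The left annihilator `°x = {z ∈ R : z*x = 0}`. -/
def lAnn {R : Type*} [Ring R] (x : R) : Set R := {z | z * x = 0}

section Aux
variable {R : Type*} [Ring R] [StarRing R]

omit [StarRing R] in
lemma wci_aux_pow (a y : R) (h2 : a * y ^ 2 = y) : ∀ n : ℕ, a ^ n * y ^ (n + 1) = y := by
  intro n
  induction n with
  | zero => simpa using h2 ▸ rfl
  | succ n ih =>
    have e : a ^ (n + 1) * y ^ (n + 2) = a * (a ^ n * y ^ (n + 1)) * y := by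
      rw [pow_succ' a n, pow_succ y (n + 1)]
      noncomm_ring
    rw [e, ih]
    calc a * y * y = a * y ^ 2 := by noncomm_ring
    _ = y := h2

omit [StarRing R] in
lemma wci_yay (a y : R) (k : ℕ) (h1 : y * a ^ (k + 1) = a ^ k) (h2 : a * y ^ 2 = y) :
    y * a * y = y := by
  have hk1 : a ^ k * y ^ (k + 1) = y := wci_aux_pow a y h2 k
  calc y * a * y = y * a * (a ^ k * y ^ (k + 1)) := by rw [hk1]
  _ = y * a ^ (k + 1) * y ^ (k + 1) := by rw [pow_succ' a k]; noncomm_ring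
  _ = a ^ k * y ^ (k + 1) := by rw [h1]
  _ = y := hk1

lemma wci_star3 (a y : R) (k : ℕ) (h3 : star (a ^ k) * a * y = star (a ^ k)) :
    star y * (star a * a ^ k) = a ^ k := by
  have h := congrArg star h3
  simpa only [star_mul, star_star, mul_assoc] using h

omit [StarRing R] in
lemma wci_conv_g2 (a y t : R) (k : ℕ) (hyay : y = y * a * y) (ht : a ^ k = y * t) :
    y * a ^ (k + 1) = a ^ k := by
  calc y * a ^ (k + 1) = y * a * y * t := by rw [pow_succ' a k, ht]; noncomm_ring
  _ = y * t := by rw [← hyay]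
  _ = a ^ k := ht.symm

omit [StarRing R] in
lemma wci_conv_g1 (a y t s u : R) (k : ℕ) (hyay : y = y * a * y)
    (ht : a ^ k = y * t) (hs : y = a ^ k * s) (hu : a ^ k = a ^ (k + 1) * u) :
    a * y ^ 2 = y := by
  have hyform : y = a * y * (t * u * s) := by
    calc y = a ^ k * s := hs
    _ = a ^ (k + 1) * u * s := by rw [← hu]
    _ = a * a ^ k * u * s := by rw [pow_succ' a k]
    _ = a * y * (t * u * s) := by rw [ht]; noncomm_ring
  have hay : a * y * (a * y) = a * y := by
    calc a * y * (a * y) = a * (y * a * y) := by noncomm_ring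
    _ = a * y := by rw [← hyay]
  have step : a * y * (a * y * (t * u * s)) = y := by
    calc a * y * (a * y * (t * u * s)) = a * y * (a * y) * (t * u * s) := by noncomm_ring
    _ = a * y * (t * u * s) := by rw [hay]
    _ = y := hyform.symm
  calc a * y ^ 2 = a * y * y := by noncomm_ring
  _ = a * y * (a * y * (t * u * s)) := by rw [← hyform]
  _ = y := step

lemma wci_conv_g3_ann (a y : R) (k : ℕ) (hyay : y = y * a * y)
    (hann : lAnn (star y) ⊆ lAnn (a ^ k)) :
    star (a ^ k) * a * y = star (a ^ k) := by
  have hz : (star y * star a - 1) * star y = 0 := by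
    have h := congrArg star hyay
    simp only [star_mul] at h
    rw [sub_mul, one_mul, sub_eq_zero, mul_assoc, ← h]
  have hz2 : (star y * star a - 1) * a ^ k = 0 := hann hz
  rw [sub_mul, one_mul, sub_eq_zero] at hz2
  have h := congrArg star hz2
  simp only [star_mul, star_star] at h
  rw [mul_assoc]
  exact h

end Aux

/-- characterizations of the weak core inverse in a proper *-ring. -/
theorem stmt_4 {R : Type*} [Ring R] [StarRing R]
    (hProper : ∀ r : R, star r * r = 0 → r = 0)
    (a y : R) (k : ℕ) (hk : 1 ≤ k) :
    ((y * a ^ (k + 1) = a ^ k ∧ a * y ^ 2 = y ∧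
        star (a ^ k) * a * y = star (a ^ k)) ↔
      (y = y * a * y ∧ rightIdealOf y = rightIdealOf (a ^ k) ∧
        rightIdealOf (a ^ k) = rightIdealOf (a ^ (k + 1)) ∧
        rightIdealOf (a ^ k) ⊆ rightIdealOf (star y))) ∧
    ((y * a ^ (k + 1) = a ^ k ∧ a * y ^ 2 = y ∧
        star (a ^ k) * a * y = star (a ^ k)) ↔
      (y = y * a * y ∧ rightIdealOf y = rightIdealOf (a ^ k) ∧
        rightIdealOf (a ^ k) ⊆ rightIdealOf (a ^ (k + 1)) ∧
        lAnn (star y) ⊆ lAnn (a ^ k))) ∧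
    ((y * a ^ (k + 1) = a ^ k ∧ a * y ^ 2 = y ∧
        star (a ^ k) * a * y = star (a ^ k)) ↔
      (y = y * a * y ∧ lAnn (a ^ (k + 1)) ⊆ lAnn (a ^ k) ∧
        lAnn (a ^ k) = lAnn y ∧ lAnn (star y) ⊆ lAnn (a ^ k))) := by
  refine ⟨⟨?_, ?_⟩, ⟨?_, ?_⟩, ⟨?_, ?_⟩⟩
  -- (i) → (ii)
  · rintro ⟨h1, h2, h3⟩
    have hk1 : a ^ k * y ^ (k + 1) = y := wci_aux_pow a y h2 k
    have hk2 : a ^ (k + 1) * y ^ (k + 2) = y := wci_aux_pow a y h2 (k + 1)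
    have hyay := wci_yay a y k h1 h2
    have h3s := wci_star3 a y k h3
    refine ⟨hyay.symm, ?_, ?_, ?_⟩
    · apply Set.Subset.antisymm
      · rintro z ⟨r, rfl⟩
        exact ⟨y ^ (k + 1) * r, by conv_rhs => rw [← mul_assoc, hk1]⟩
      · rintro z ⟨r, rfl⟩
        exact ⟨a ^ (k + 1) * r, by conv_rhs => rw [← mul_assoc, h1]⟩
    · apply Set.Subset.antisymm
      · rintro z ⟨r, rfl⟩
        exact ⟨y ^ (k + 2) * (a ^ (k + 1) * r), by
          conv_rhs => rw [← mul_assoc, hk2, ← mul_assoc, h1]⟩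
      · rintro z ⟨r, rfl⟩
        exact ⟨a * r, by conv_rhs => rw [← mul_assoc, ← pow_succ]⟩
    · rintro z ⟨r, rfl⟩
      exact ⟨star a * a ^ k * r, by
        conv_rhs => rw [← mul_assoc, h3s]⟩
  -- (ii) → (i)
  · rintro ⟨hyay, he1, he2, hsub⟩
    have hself : a ^ k ∈ rightIdealOf (a ^ k) := ⟨1, (mul_one _).symm⟩
    obtain ⟨t, ht⟩ : a ^ k ∈ rightIdealOf y := by rw [he1]; exact hself
    obtain ⟨s, hs⟩ : y ∈ rightIdealOf (a ^ k) := by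
      rw [← he1]; exact ⟨1, (mul_one _).symm⟩
    obtain ⟨u, hu⟩ : a ^ k ∈ rightIdealOf (a ^ (k + 1)) := by rw [← he2]; exact hself
    obtain ⟨v, hv⟩ : a ^ k ∈ rightIdealOf (star y) := hsub hself
    refine ⟨wci_conv_g2 a y t k hyay ht, wci_conv_g1 a y t s u k hyay ht hs hu, ?_⟩
    rw [hv]
    simp only [star_mul, star_star]
    calc star v * y * a * y = star v * (y * a * y) := by noncomm_ring
    _ = star v * y := by rw [← hyay]
  -- (i) → (iii)
  · rintro ⟨h1, h2, h3⟩
    have hk1 : a ^ k * y ^ (k + 1) = y := wci_aux_pow a y h2 k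
    have hk2 : a ^ (k + 1) * y ^ (k + 2) = y := wci_aux_pow a y h2 (k + 1)
    have hyay := wci_yay a y k h1 h2
    have h3s := wci_star3 a y k h3
    refine ⟨hyay.symm, ?_, ?_, ?_⟩
    · apply Set.Subset.antisymm
      · rintro z ⟨r, rfl⟩
        exact ⟨y ^ (k + 1) * r, by conv_rhs => rw [← mul_assoc, hk1]⟩
      · rintro z ⟨r, rfl⟩
        exact ⟨a ^ (k + 1) * r, by conv_rhs => rw [← mul_assoc, h1]⟩
    · rintro z ⟨r, rfl⟩
      exact ⟨y ^ (k + 2) * (a ^ (k + 1) * r), by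
        conv_rhs => rw [← mul_assoc, hk2, ← mul_assoc, h1]⟩
    · intro z hz
      have hz' : z * star y = 0 := hz
      show z * a ^ k = 0
      calc z * a ^ k = z * (star y * (star a * a ^ k)) := by rw [h3s]
      _ = z * star y * (star a * a ^ k) := by noncomm_ring
      _ = 0 := by rw [hz', zero_mul]
  -- (iii) → (i)
  · rintro ⟨hyay, he1, hsub2, hann⟩
    have hself : a ^ k ∈ rightIdealOf (a ^ k) := ⟨1, (mul_one _).symm⟩
    obtain ⟨t, ht⟩ : a ^ k ∈ rightIdealOf y := by rw [he1]; exact hself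
    obtain ⟨s, hs⟩ : y ∈ rightIdealOf (a ^ k) := by
      rw [← he1]; exact ⟨1, (mul_one _).symm⟩
    obtain ⟨u, hu⟩ : a ^ k ∈ rightIdealOf (a ^ (k + 1)) := hsub2 hself
    exact ⟨wci_conv_g2 a y t k hyay ht, wci_conv_g1 a y t s u k hyay ht hs hu,
      wci_conv_g3_ann a y k hyay hann⟩
  -- (i) → (iv)
  · rintro ⟨h1, h2, h3⟩
    have hk1 : a ^ k * y ^ (k + 1) = y := wci_aux_pow a y h2 k
    have hk2 : a ^ (k + 1) * y ^ (k + 2) = y := wci_aux_pow a y h2 (k + 1)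
    have hyay := wci_yay a y k h1 h2
    have h3s := wci_star3 a y k h3
    refine ⟨hyay.symm, ?_, ?_, ?_⟩
    · intro z hz
      have hz' : z * a ^ (k + 1) = 0 := hz
      show z * a ^ k = 0
      calc z * a ^ k = z * (y * a ^ (k + 1)) := by rw [h1]
      _ = z * (a ^ (k + 1) * y ^ (k + 2) * a ^ (k + 1)) := by rw [hk2]
      _ = z * a ^ (k + 1) * (y ^ (k + 2) * a ^ (k + 1)) := by noncomm_ring
      _ = 0 := by rw [hz', zero_mul]
    · apply Set.Subset.antisymm
      · intro z hz
        have hz' : z * a ^ k = 0 := hz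
        show z * y = 0
        calc z * y = z * (a ^ k * y ^ (k + 1)) := by rw [hk1]
        _ = z * a ^ k * y ^ (k + 1) := by noncomm_ring
        _ = 0 := by rw [hz', zero_mul]
      · intro z hz
        have hz' : z * y = 0 := hz
        show z * a ^ k = 0
        calc z * a ^ k = z * (y * a ^ (k + 1)) := by rw [h1]
        _ = z * y * a ^ (k + 1) := by noncomm_ring
        _ = 0 := by rw [hz', zero_mul]
    · intro z hz
      have hz' : z * star y = 0 := hz
      show z * a ^ k = 0
      calc z * a ^ k = z * (star y * (star a * a ^ k)) := by rw [h3s]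
      _ = z * star y * (star a * a ^ k) := by noncomm_ring
      _ = 0 := by rw [hz', zero_mul]
  -- (iv) → (i)
  · rintro ⟨hyay, ha1, ha2, ha3⟩
    have g2 : y * a ^ (k + 1) = a ^ k := by
      have hz : (y * a - 1) * y = 0 := by
        rw [sub_mul, one_mul, sub_eq_zero]; exact hyay.symm
      have hz2 : (y * a - 1) * a ^ k = 0 := by
        have hmem : (y * a - 1) ∈ lAnn y := hz
        rw [← ha2] at hmem
        exact hmem
      rw [sub_mul, one_mul, sub_eq_zero] at hz2
      rw [pow_succ' a k, ← mul_assoc, hz2]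
    have g1 : a * y ^ 2 = y := by
      have hz : (a * y - 1) * a ^ (k + 1) = 0 := by
        rw [sub_mul, one_mul, sub_eq_zero, mul_assoc, g2, ← pow_succ']
      have hz2 : (a * y - 1) ∈ lAnn (a ^ k) := ha1 hz
      rw [ha2] at hz2
      have hz3 : (a * y - 1) * y = 0 := hz2
      rw [sub_mul, one_mul, sub_eq_zero] at hz3
      rw [pow_two, ← mul_assoc]
      exact hz3
    exact ⟨g2, g1, wci_conv_g3_ann a y k hyay ha3⟩
end

section
/- Let R be a proper *-ring, let a, z ∈ R, and let m, n ≥ 1 be integers. If z*a^(m+1) = a^m, a*z² = z, and (a^n)* * a * z = (a^n)*, then (a^m)* * a * z = (a^m)*; in particular, z is a weak core inverse of a with index at most m. -/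
/-- a sufficient condition for being a weak core inverse. -/
theorem stmt_5 {R : Type*} [Ring R] [StarRing R]
    (hProper : ∀ r : R, star r * r = 0 → r = 0)
    (a z : R) (m n : ℕ) (hm : 1 ≤ m) (hn : 1 ≤ n)
    (h1 : z * a ^ (m + 1) = a ^ m) (h2 : a * z ^ 2 = z)
    (h3 : star (a ^ n) * a * z = star (a ^ n)) :
    star (a ^ m) * a * z = star (a ^ m) := by
  -- a * z^(j+2) = z^(j+1)
  have hA : ∀ j : ℕ, a * z ^ (j + 2) = z ^ (j + 1) := by
    intro j
    calc a * z ^ (j + 2) = (a * z ^ 2) * z ^ j := by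
          rw [show j + 2 = 2 + j from by omega, pow_add, mul_assoc]
      _ = z * z ^ j := by rw [h2]
      _ = z ^ (j + 1) := by rw [← pow_succ']
  -- z^j * a^(m+j) = a^m
  have hB : ∀ j : ℕ, z ^ j * a ^ (m + j) = a ^ m := by
    intro j
    induction j with
    | zero => simp
    | succ k ih =>
      have e1 : z ^ (k + 1) * a ^ (m + (k + 1)) =
          z ^ k * ((z * a ^ (m + 1)) * a ^ k) := by
        rw [pow_succ, show m + (k + 1) = (m + 1) + k from by omega, pow_add,
          mul_assoc, mul_assoc]
      rw [e1, h1, ← pow_add]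
      exact ih
  -- a^j * z^(j+1) = z
  have hC : ∀ j : ℕ, a ^ j * z ^ (j + 1) = z := by
    intro j
    induction j with
    | zero => simp
    | succ k ih =>
      calc a ^ (k + 1) * z ^ (k + 2) = a ^ k * (a * z ^ (k + 2)) := by
            rw [pow_succ, mul_assoc]
        _ = a ^ k * z ^ (k + 1) := by rw [hA k]
        _ = z := ih
  -- a*z = a^(n+1) * z^(n+1)
  have haz : a * z = a ^ (n + 1) * z ^ (n + 1) := by
    conv_lhs => rw [← hC n]
    rw [← mul_assoc, ← pow_succ']
  -- h3 one power up
  have hD : star (a ^ (n + 1)) * (a * z) = star (a ^ (n + 1)) := by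
    have e : star (a ^ (n + 1)) = star a * star (a ^ n) := by
      rw [pow_succ, star_mul]
    rw [e, mul_assoc, ← mul_assoc (star (a ^ n)), h3]
  -- p = a*z satisfies star p = star p * p
  have hp : star (a * z) = star (a * z) * (a * z) := by
    conv_lhs => rw [haz, star_mul, ← hD, ← mul_assoc, ← star_mul, ← haz]
  -- star p = p
  have hherm : star (a * z) = a * z := by
    have h' := congrArg star hp
    rw [star_star, star_mul (star (a * z)) (a * z), star_star, ← hp] at h'
    exact h'.symm
  -- p * a^n = a^n
  have h3' : (a * z) * a ^ n = a ^ n := by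
    have h' := congrArg star h3
    rw [star_mul, star_mul, star_star, ← mul_assoc, ← star_mul, hherm] at h'
    exact h'
  -- key: p * a^m = a^m
  have key : (a * z) * a ^ m = a ^ m := by
    rcases le_total m n with h | h
    · obtain ⟨j, hj⟩ := Nat.exists_eq_add_of_le h
      cases j with
      | zero => subst hj; simpa using h3'
      | succ k =>
        have hBm : z ^ (k + 1) * a ^ n = a ^ m := by rw [hj]; exact hB (k + 1)
        calc (a * z) * a ^ m = (a * z) * (z ^ (k + 1) * a ^ n) := by rw [hBm]
          _ = (a * (z * z ^ (k + 1))) * a ^ n := by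
                rw [mul_assoc, mul_assoc, ← mul_assoc z]
          _ = (a * z ^ (k + 2)) * a ^ n := by rw [← pow_succ']
          _ = z ^ (k + 1) * a ^ n := by rw [hA k]
          _ = a ^ m := hBm
    · obtain ⟨j, hj⟩ := Nat.exists_eq_add_of_le h
      subst hj
      rw [pow_add, ← mul_assoc, h3']
  calc star (a ^ m) * a * z = star (a ^ m) * star (a * z) := by
        rw [mul_assoc, hherm]
    _ = star ((a * z) * a ^ m) := (star_mul _ _).symm
    _ = star (a ^ m) := by rw [key]
end

section
/- Let R be a proper *-ring, let a, y ∈ R, and let k ≥ 1 be an integer. If y is a weak core inverse of a with index at most k, then a²*y is a weak core inverse of y with index at most k; that is, (a²*y)*y^(k+1) = y^k, y*(a²*y)² = a²*y, and (y^k)* * y * (a²*y) = (y^k)*. -/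
/-- if `y` is a weak core inverse of `a` with index at most `k`,
then `a²*y` is a weak core inverse of `y` with index at most `k`. -/
theorem stmt_6 {R : Type*} [Ring R] [StarRing R]
    (hProper : ∀ r : R, star r * r = 0 → r = 0)
    (a y : R) (k : ℕ) (hk : 1 ≤ k)
    (h1 : y * a ^ (k + 1) = a ^ k) (h2 : a * y ^ 2 = y)
    (h3 : star (a ^ k) * a * y = star (a ^ k)) :
    (a ^ 2 * y) * y ^ (k + 1) = y ^ k ∧
    y * (a ^ 2 * y) ^ 2 = a ^ 2 * y ∧
    star (y ^ k) * y * (a ^ 2 * y) = star (y ^ k) := by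
  obtain ⟨m, rfl⟩ : ∃ m, k = m + 1 := ⟨k - 1, (Nat.succ_pred_eq_of_pos hk).symm⟩
  -- y = a^(n+1) * y^(n+2) for all n
  have e1 : ∀ n : ℕ, y = a ^ (n + 1) * y ^ (n + 2) := by
    intro n
    induction n with
    | zero => simpa using h2.symm
    | succ n ih =>
      have hy : y ^ (n + 2) = a * y ^ (n + 3) := by
        calc y ^ (n + 2) = y * y ^ (n + 1) := by rw [← pow_succ']
          _ = a * y ^ 2 * y ^ (n + 1) := by rw [h2]
          _ = a * y ^ (n + 3) := by rw [mul_assoc, ← pow_add, show 2 + (n + 1) = n + 3 by omega]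
      calc y = a ^ (n + 1) * y ^ (n + 2) := ih
        _ = a ^ (n + 1) * (a * y ^ (n + 3)) := by rw [hy]
        _ = a ^ (n + 2) * y ^ (n + 3) := by
            rw [← mul_assoc, ← pow_succ]
  have hyk : y = a ^ (m + 1) * y ^ (m + 2) := e1 m
  have hy2 : y = a ^ 2 * y ^ 3 := e1 1
  -- goal 1
  have g1 : (a ^ 2 * y) * y ^ (m + 1 + 1) = y ^ (m + 1) := by
    calc (a ^ 2 * y) * y ^ (m + 2) = a ^ 2 * (y ^ 3 * y ^ m) := by
          rw [mul_assoc, ← pow_succ' y (m+2), ← pow_add, show m + 2 + 1 = 3 + m by omega, pow_add]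
      _ = (a ^ 2 * y ^ 3) * y ^ m := by rw [mul_assoc]
      _ = y * y ^ m := by rw [← hy2]
      _ = y ^ (m + 1) := (pow_succ' y m).symm
  -- y * a^(m+3) = a^(m+2)
  have hya : y * a ^ (m + 3) = a ^ (m + 2) := by
    calc y * a ^ (m + 3) = y * (a ^ (m + 2) * a) := by rw [← pow_succ]
      _ = (y * a ^ (m + 2)) * a := by rw [mul_assoc]
      _ = a ^ (m + 1) * a := by rw [h1]
      _ = a ^ (m + 2) := (pow_succ a (m + 1)).symm
  -- y * a^2 * y = a * y
  have key : y * a ^ 2 * y = a * y := by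
    calc y * a ^ 2 * y = y * a ^ 2 * (a ^ (m + 1) * y ^ (m + 2)) := by rw [← hyk]
      _ = y * (a ^ 2 * a ^ (m + 1)) * y ^ (m + 2) := by
          rw [mul_assoc, mul_assoc, mul_assoc]
      _ = y * a ^ (m + 3) * y ^ (m + 2) := by rw [← pow_add]; ring_nf
      _ = a ^ (m + 2) * y ^ (m + 2) := by rw [hya]
      _ = a * (a ^ (m + 1) * y ^ (m + 2)) := by
          rw [← mul_assoc, ← pow_succ']
      _ = a * y := by rw [← hyk]
  -- goal 2
  have g2 : y * (a ^ 2 * y) ^ 2 = a ^ 2 * y := by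
    calc y * (a ^ 2 * y) ^ 2 = (y * a ^ 2 * y) * (a ^ 2 * y) := by
          rw [sq]; noncomm_ring
      _ = a * y * (a ^ 2 * y) := by rw [key]
      _ = a * (y * a ^ 2 * y) := by noncomm_ring
      _ = a * (a * y) := by rw [key]
      _ = a ^ 2 * y := by rw [← mul_assoc, ← sq]
  -- star(a*y) * a^(m+1) = a^(m+1)
  have h3' : star (a * y) * a ^ (m + 1) = a ^ (m + 1) := by
    have := congrArg star h3
    simpa [star_mul, mul_assoc] using this
  -- y^(m+1) = a^(m+1) * y^(2m+2)
  have hykk : y ^ (m + 1) = a ^ (m + 1) * y ^ (2 * m + 2) := by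
    calc y ^ (m + 1) = y * y ^ m := pow_succ' y m
      _ = a ^ (m + 1) * y ^ (m + 2) * y ^ m := by rw [← hyk]
      _ = a ^ (m + 1) * y ^ (2 * m + 2) := by rw [mul_assoc, ← pow_add]; ring_nf
  have key2 : star (a * y) * y ^ (m + 1) = y ^ (m + 1) := by
    calc star (a * y) * y ^ (m + 1)
        = star (a * y) * a ^ (m + 1) * y ^ (2 * m + 2) := by
          rw [mul_assoc, ← hykk]
      _ = a ^ (m + 1) * y ^ (2 * m + 2) := by rw [h3']
      _ = y ^ (m + 1) := hykk.symm
  -- goal 3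
  have g3 : star (y ^ (m + 1)) * y * (a ^ 2 * y) = star (y ^ (m + 1)) := by
    calc star (y ^ (m + 1)) * y * (a ^ 2 * y)
        = star (y ^ (m + 1)) * (y * a ^ 2 * y) := by
          noncomm_ring
      _ = star (y ^ (m + 1)) * (a * y) := by rw [key]
      _ = star (star (a * y) * y ^ (m + 1)) := by
          rw [star_mul, star_star]
      _ = star (y ^ (m + 1)) := by rw [key2]
  exact ⟨g1, g2, g3⟩
end

section
/- Let R be a proper *-ring, let a, y ∈ R, and let k ≥ 1 be an integer. If y is a weak core inverse of a with index at most k, then a²*y is a group inverse of y; that is, y*(a²*y)*y = y, (a²*y)*y*(a²*y) = a²*y, and y*(a²*y) = (a²*y)*y. -/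
private lemma wci_pow {R : Type*} [Ring R] (a y : R) (h2 : a * y ^ 2 = y) :
    ∀ n : ℕ, y = a ^ n * y ^ (n + 1) := by
  intro n
  induction n with
  | zero => simp
  | succ n ih =>
    calc y = a ^ n * y ^ (n + 1) := ih
    _ = a ^ n * (a * y ^ 2 * y ^ n) := by rw [h2, ← pow_succ']
    _ = a ^ (n + 1) * y ^ (n + 2) := by
        rw [pow_succ a n, pow_succ' y (n+1), pow_succ' y n, sq]
        noncomm_ring

/-- if `y` is a weak core inverse of `a` with index at most `k`,
then `a²*y` is a group inverse of `y`. -/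
theorem stmt_7 {R : Type*} [Ring R] [StarRing R]
    (hProper : ∀ r : R, star r * r = 0 → r = 0)
    (a y : R) (k : ℕ) (hk : 1 ≤ k)
    (h1 : y * a ^ (k + 1) = a ^ k) (h2 : a * y ^ 2 = y)
    (h3 : star (a ^ k) * a * y = star (a ^ k)) :
    y * (a ^ 2 * y) * y = y ∧
    (a ^ 2 * y) * y * (a ^ 2 * y) = a ^ 2 * y ∧
    y * (a ^ 2 * y) = (a ^ 2 * y) * y := by
  have hy : y = a ^ k * y ^ (k + 1) := wci_pow a y h2 k
  have hy2 : a * y * y = y := by rw [mul_assoc, ← sq, h2]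
  -- L2 : y * a ^ 2 * y = a * y
  have L2 : y * a ^ 2 * y = a * y := by
    calc y * a ^ 2 * y = y * a ^ 2 * (a ^ k * y ^ (k + 1)) := by rw [← hy]
    _ = y * (a ^ 2 * a ^ k) * y ^ (k + 1) := by noncomm_ring
    _ = y * a ^ (k + 2) * y ^ (k + 1) := by rw [← pow_add, Nat.add_comm 2 k]
    _ = y * a ^ (k + 1) * a * y ^ (k + 1) := by rw [pow_succ a (k+1)]; noncomm_ring
    _ = a ^ k * a * y ^ (k + 1) := by rw [h1]
    _ = a * (a ^ k * y ^ (k + 1)) := by rw [← pow_succ, pow_succ', mul_assoc]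
    _ = a * y := by rw [← hy]
  have e2 : a ^ 2 * y * y = a * y := by
    calc a ^ 2 * y * y = a * (a * y * y) := by rw [sq]; noncomm_ring
    _ = a * y := by rw [hy2]
  refine ⟨?_, ?_, ?_⟩
  · rw [← mul_assoc, L2, hy2]
  · calc (a ^ 2 * y) * y * (a ^ 2 * y) = (a * y) * (a ^ 2 * y) := by rw [e2]
    _ = a * (y * a ^ 2 * y) := by noncomm_ring
    _ = a * (a * y) := by rw [L2]
    _ = a ^ 2 * y := by rw [sq, mul_assoc]
  · rw [← mul_assoc, L2, e2]
end

section
/- Let R be a proper *-ring, let a ∈ R, and let k ≥ 1 be an integer. Suppose d is a Drazin inverse of a with index at most k and x is a {1,3}-inverse of a^k. Then d*a^k*x is a weak core inverse of a with index at most k, and moreover a*(d*a^k*x) = a^k*x. -/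
/-- a weak core inverse built from a Drazin inverse and a {1,3}-inverse. -/
theorem stmt_8 {R : Type*} [Ring R] [StarRing R]
    (hProper : ∀ r : R, star r * r = 0 → r = 0)
    (a d x : R) (k : ℕ) (hk : 1 ≤ k)
    (hd1 : d * a * d = d) (hd2 : a * d = d * a) (hd3 : d * a ^ (k + 1) = a ^ k)
    (hx1 : a ^ k * x * a ^ k = a ^ k) (hx2 : star (a ^ k * x) = a ^ k * x) :
    (d * a ^ k * x) * a ^ (k + 1) = a ^ k ∧
    a * (d * a ^ k * x) ^ 2 = d * a ^ k * x ∧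
    star (a ^ k) * a * (d * a ^ k * x) = star (a ^ k) ∧
    a * (d * a ^ k * x) = a ^ k * x := by
  -- d commutes with powers of a
  have hcomm : ∀ n : ℕ, a ^ n * d = d * a ^ n := by
    intro n
    induction n with
    | zero => simp
    | succ n ih =>
      rw [pow_succ, mul_assoc, hd2, ← mul_assoc, ih, mul_assoc]
  have hcomm2 : ∀ n m : ℕ, a ^ n * d ^ m = d ^ m * a ^ n := by
    intro n m
    induction m with
    | zero => simp
    | succ m ih =>
      rw [pow_succ, ← mul_assoc, ih, mul_assoc, hcomm, ← mul_assoc]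
  -- d = d^(n+1) * a^n
  have hdn : ∀ n : ℕ, d = d ^ (n + 1) * a ^ n := by
    intro n
    induction n with
    | zero => simp
    | succ n ih =>
      have h2 : d = d ^ 2 * a := by
        calc d = d * a * d := hd1.symm
        _ = d * (d * a) := by rw [mul_assoc, ← hd2]
        _ = d ^ 2 * a := by rw [← mul_assoc, sq]
      calc d = d ^ (n + 1) * a ^ n := ih
      _ = d ^ n * d * a ^ n := by rw [pow_succ]
      _ = d ^ n * (d ^ 2 * a) * a ^ n := by rw [← h2]
      _ = d ^ (n + 2) * (a * a ^ n) := by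
          rw [← mul_assoc, ← pow_add, mul_assoc]
      _ = d ^ (n + 1 + 1) * a ^ (n + 1) := by rw [← pow_succ']
  -- a * y = a^k * x
  have h4 : a * (d * a ^ k * x) = a ^ k * x := by
    calc a * (d * a ^ k * x) = (a * d) * a ^ k * x := by noncomm_ring
    _ = d * (a * a ^ k) * x := by rw [hd2]; noncomm_ring
    _ = d * a ^ (k + 1) * x := by rw [← pow_succ']
    _ = a ^ k * x := by rw [hd3]
  -- key: a^k * x * (d * a^k) = d * a^k
  have hkey : a ^ k * x * (d * a ^ k) = d * a ^ k := by
    have h1 : d * a ^ k = a ^ k * d ^ (k + 1) * a ^ k := by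
      rw [hcomm2, mul_assoc]
      calc d * a ^ k = d ^ (k + 1) * a ^ k * a ^ k := by rw [← hdn]
      _ = d ^ (k + 1) * (a ^ k * a ^ k) := by rw [mul_assoc]

    calc a ^ k * x * (d * a ^ k)
        = a ^ k * x * (a ^ k * d ^ (k + 1) * a ^ k) := by rw [h1]
      _ = (a ^ k * x * a ^ k) * d ^ (k + 1) * a ^ k := by noncomm_ring
      _ = a ^ k * d ^ (k + 1) * a ^ k := by rw [hx1]
      _ = d * a ^ k := h1.symm
  refine ⟨?_, ?_, ?_, h4⟩
  · calc d * a ^ k * x * a ^ (k + 1)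
        = d * (a ^ k * x * a ^ k) * a := by rw [pow_succ]; noncomm_ring
      _ = d * a ^ k * a := by rw [hx1]
      _ = d * a ^ (k + 1) := by rw [pow_succ, mul_assoc]
      _ = a ^ k := hd3
  · calc a * (d * a ^ k * x) ^ 2
        = (a * (d * a ^ k * x)) * (d * a ^ k * x) := by noncomm_ring
      _ = a ^ k * x * (d * a ^ k) * x := by rw [h4]; noncomm_ring
      _ = d * a ^ k * x := by rw [hkey]
  · calc star (a ^ k) * a * (d * a ^ k * x)
        = star (a ^ k) * (a * (d * a ^ k * x)) := by rw [mul_assoc]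
      _ = star (a ^ k) * (a ^ k * x) := by rw [h4]
      _ = star (a ^ k) * star (a ^ k * x) := by rw [hx2]
      _ = star (a ^ k * x * a ^ k) := by simp [star_mul, mul_assoc]
      _ = star (a ^ k) := by rw [hx1]
end

section
/- Let R be a proper *-ring, let a ∈ R, and let k ≥ 1 be an integer. If c is a core inverse of a^k, then a^(k-1)*c is a weak core inverse of a with index at most k. -/
/-- if `c` is a core inverse of `a^k`, then `a^(k-1)*c` is a
weak core inverse of `a` with index at most `k`. -/
theorem stmt_10 {R : Type*} [Ring R] [StarRing R]
    (hProper : ∀ r : R, star r * r = 0 → r = 0)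
    (a c : R) (k : ℕ) (hk : 1 ≤ k)
    (hc1 : c * (a ^ k) ^ 2 = a ^ k) (hc2 : a ^ k * c ^ 2 = c)
    (hc3 : star (a ^ k * c) = a ^ k * c) :
    (a ^ (k - 1) * c) * a ^ (k + 1) = a ^ k ∧
    a * (a ^ (k - 1) * c) ^ 2 = a ^ (k - 1) * c ∧
    star (a ^ k) * a * (a ^ (k - 1) * c) = star (a ^ k) := by
  obtain ⟨m, rfl⟩ : ∃ m, k = m + 1 := ⟨k - 1, (Nat.succ_pred_eq_of_pos hk).symm⟩
  simp only [Nat.add_sub_cancel]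
  set b := a ^ (m + 1) with hbdef
  have hc1' : c * (b * b) = b := by rw [← sq]; exact hc1
  have hc2' : b * (c * c) = c := by rw [← sq]; exact hc2
  -- key identity: b * c * b = b
  have hbcb : b * c * b = b := by
    calc b * c * b = b * c * (c * (b * b)) := by rw [hc1']
      _ = b * (c * c) * (b * b) := by simp only [mul_assoc]
      _ = c * (b * b) := by rw [hc2']
      _ = b := hc1'
  have hbf : b * (c * b) = b := by rw [← mul_assoc]; exact hbcb
  have hfb : c * b * b = b := by rw [mul_assoc]; exact hc1'
  have hbh : b * (c * c * b) = c * b := by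
    calc b * (c * c * b) = b * (c * c) * b := by simp only [mul_assoc]
      _ = c * b := by rw [hc2']
  have hhb : c * c * b * b = c * b := by
    calc c * c * b * b = c * (c * (b * b)) := by simp only [mul_assoc]
      _ = c * b := by rw [hc1']
  have hab : a * b = b * a := ((Commute.refl a).pow_right (m + 1)).eq
  -- a commutes with f := c * b
  have haf : a * (c * b) = c * b * a := by
    have e1 : c * b * a * (c * b) = c * b * a := by
      calc c * b * a * (c * b)
          = c * c * b * b * a * (c * b) := by rw [hhb]
        _ = c * c * b * (b * a) * (c * b) := by simp only [mul_assoc]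
        _ = c * c * b * (a * b) * (c * b) := by rw [hab]
        _ = c * c * b * a * (b * (c * b)) := by simp only [mul_assoc]
        _ = c * c * b * a * b := by rw [hbf]
        _ = c * c * b * (a * b) := by simp only [mul_assoc]
        _ = c * c * b * (b * a) := by rw [hab]
        _ = c * c * b * b * a := by simp only [mul_assoc]
        _ = c * b * a := by rw [hhb]

    have e2 : c * b * a * (c * b) = a * (c * b) := by
      calc c * b * a * (c * b)
          = c * b * a * (b * (c * c * b)) := by rw [hbh]
        _ = c * b * (a * b) * (c * c * b) := by simp only [mul_assoc]
        _ = c * b * (b * a) * (c * c * b) := by rw [hab]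
        _ = c * b * b * (a * (c * c * b)) := by simp only [mul_assoc]
        _ = b * (a * (c * c * b)) := by rw [hfb]
        _ = b * a * (c * c * b) := by simp only [mul_assoc]
        _ = a * b * (c * c * b) := by rw [hab]
        _ = a * (b * (c * c * b)) := by simp only [mul_assoc]
        _ = a * (c * b) := by rw [hbh]
    rw [← e2, e1]
  have ham : a * a ^ m = b := (pow_succ' a m).symm
  have hma : a ^ m * a = b := (pow_succ a m).symm
  refine ⟨?_, ?_, ?_⟩
  · -- (a^m * c) * a^(m+2) = b
    calc a ^ m * c * a ^ (m + 1 + 1)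
        = a ^ m * c * (b * a) := by rw [pow_succ]
      _ = a ^ m * (c * b * a) := by simp only [mul_assoc]
      _ = a ^ m * (a * (c * b)) := by rw [← haf]
      _ = a ^ m * a * (c * b) := by simp only [mul_assoc]
      _ = b * (c * b) := by rw [hma]
      _ = b := hbf
  · -- a * (a^m * c)^2 = a^m * c
    have hmb : a ^ m * b = b * a ^ m := (pow_mul_comm a m (m + 1))
    have hexp : a ^ m * c = a ^ m * b * (c * c) := by
      rw [mul_assoc, hc2']
    calc a * (a ^ m * c) ^ 2
        = a * (a ^ m * c * (a ^ m * c)) := by rw [sq]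
      _ = a * a ^ m * c * (a ^ m * c) := by simp only [mul_assoc]
      _ = b * c * (a ^ m * c) := by rw [ham]
      _ = b * c * (a ^ m * b * (c * c)) := by rw [← hexp]
      _ = b * c * (b * a ^ m * (c * c)) := by rw [hmb]
      _ = b * c * b * (a ^ m * (c * c)) := by simp only [mul_assoc]
      _ = b * (a ^ m * (c * c)) := by rw [hbcb]
      _ = b * a ^ m * (c * c) := by simp only [mul_assoc]
      _ = a ^ m * b * (c * c) := by rw [← hmb]
      _ = a ^ m * c := by rw [← hexp]
  · -- star b * a * (a^m * c) = star b
    calc star b * a * (a ^ m * c)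
        = star b * (a * a ^ m * c) := by simp only [mul_assoc]
      _ = star b * (b * c) := by rw [ham]
      _ = star b * star (b * c) := by rw [hc3]
      _ = star (b * c * b) := (star_mul (b * c) b).symm
      _ = star b := by rw [hbcb]
end

section
/- Let R be a proper *-ring, let a ∈ R, and let n ≥ 1 be an integer. (1) If y is a weak core inverse of a with index at most m (m ≥ 1), then y^n is a weak core inverse of a^n with index at most m. (2) Conversely, if z is a weak core inverse of a^n with index at most l (l ≥ 1), then a^(n-1)*z is a weak core inverse of a with index at most n*l. -/
section helpers
variable {M : Type*} [Monoid M]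

/-- From `a*y² = y`: `aᵏ·y^(k+1) = y`. -/
lemma wci_hp1 (a y : M) (h : a * y ^ 2 = y) : ∀ k : ℕ, a ^ k * y ^ (k + 1) = y := by
  intro k
  induction k with
  | zero => simp
  | succ k ih =>
    have e : a ^ (k + 1) * y ^ (k + 1 + 1) = a ^ k * (a * (y ^ 2 * y ^ k)) := by
      rw [pow_succ, show k + 1 + 1 = 2 + k from by omega, pow_add]
      simp only [mul_assoc]
    rw [e, ← mul_assoc a, h, ← pow_succ']
    exact ih

/-- From `y·a^(m+1) = aᵐ`: `yʲ·a^(j+(m+k)) = a^(m+k)`. -/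
lemma wci_hp2 (a y : M) (m : ℕ) (h : y * a ^ (m + 1) = a ^ m) :
    ∀ j k : ℕ, y ^ j * a ^ (j + (m + k)) = a ^ (m + k) := by
  intro j
  induction j with
  | zero => intro k; simp
  | succ j ih =>
    intro k
    have e : y ^ (j + 1) * a ^ (j + 1 + (m + k)) =
        y ^ j * (y * a ^ (m + 1) * a ^ (j + k)) := by
      rw [pow_succ, show j + 1 + (m + k) = (m + 1) + (j + k) from by omega, pow_add]
      simp only [mul_assoc]
    rw [e, h, ← pow_add, show m + (j + k) = j + (m + k) from by omega]
    exact ih k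

/-- From `a*y² = y`: `aᵏ·y^(2k) = yᵏ`. -/
lemma wci_hp3 (a y : M) (h : a * y ^ 2 = y) : ∀ k : ℕ, a ^ k * y ^ (2 * k) = y ^ k := by
  intro k
  induction k with
  | zero => simp
  | succ k ih =>
    have e : a ^ (k + 1) * y ^ (2 * (k + 1)) = a * (a ^ k * y ^ (2 * k) * y ^ 2) := by
      rw [pow_succ', show 2 * (k + 1) = 2 * k + 2 from by ring, pow_add]
      simp only [mul_assoc]
    rw [e, ih, ← pow_add, show k + 2 = 2 + k from by omega, pow_add, ← mul_assoc, h,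
      ← pow_succ']

/-- From `a*y² = y`: `a^(j+1)·y^(j+1) = a·y`. -/
lemma wci_hp4 (a y : M) (h : a * y ^ 2 = y) : ∀ j : ℕ, a ^ (j + 1) * y ^ (j + 1) = a * y := by
  intro j
  induction j with
  | zero => simp
  | succ j ih =>
    have ea : a ^ (j + 1 + 1) = a ^ (j + 1) * a := pow_succ a (j + 1)
    have ey : y ^ (j + 1 + 1) = y ^ 2 * y ^ j := by
      rw [show j + 1 + 1 = 2 + j from by omega, pow_add]
    have e : a ^ (j + 1 + 1) * y ^ (j + 1 + 1) = a ^ (j + 1) * (a * (y ^ 2 * y ^ j)) := by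
      rw [ea, ey]; simp only [mul_assoc]
    rw [e, ← mul_assoc a, h, ← pow_succ']
    exact ih

end helpers

lemma wci_hp5 {R : Type*} [Monoid R] [StarMul R] (a y : R) (m : ℕ)
    (h : star (a ^ m) * (a * y) = star (a ^ m)) :
    ∀ j : ℕ, star (a ^ ((j + 1) * m)) * (a * y) = star (a ^ ((j + 1) * m)) := by
  intro j
  induction j with
  | zero => simpa using h
  | succ j ih =>
    have e : a ^ ((j + 1 + 1) * m) = a ^ ((j + 1) * m) * a ^ m := by
      rw [← pow_add]; congr 1; ring
    rw [e, star_mul, mul_assoc, ih]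

section part2
variable {M : Type*} [Monoid M]

lemma wci_hp6 (a z : M) (k l : ℕ)
    (hF1 : a ^ ((k + 1) * l) * z ^ (l + 1) = z)
    (hF2 : a ^ (k + 1) * z * a ^ ((k + 1) * l) = a ^ ((k + 1) * l)) :
    a * (a ^ k * z) ^ 2 = a ^ k * z := by
  have comm : ∀ p q : ℕ, a ^ p * a ^ q = a ^ q * a ^ p := fun p q => by
    rw [← pow_add, ← pow_add, Nat.add_comm]
  calc a * (a ^ k * z) ^ 2
      = a ^ (k + 1) * (z * (a ^ k * (a ^ ((k + 1) * l) * z ^ (l + 1)))) := by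
        rw [sq, pow_succ', hF1]; simp only [mul_assoc]
    _ = a ^ (k + 1) * z * a ^ ((k + 1) * l) * (a ^ k * z ^ (l + 1)) := by
        rw [← mul_assoc (a ^ k) (a ^ ((k + 1) * l)), comm k ((k + 1) * l)]
        simp only [mul_assoc]
    _ = a ^ ((k + 1) * l) * (a ^ k * z ^ (l + 1)) := by rw [hF2]
    _ = a ^ k * (a ^ ((k + 1) * l) * z ^ (l + 1)) := by
        rw [← mul_assoc, comm, mul_assoc]
    _ = a ^ k * z := by rw [hF1]

lemma wci_hp7 (a z : M) (k l : ℕ)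
    (hz1 : z * a ^ ((k + 1) * (l + 1)) = a ^ ((k + 1) * l))
    (hF1 : a ^ ((k + 1) * l) * z ^ (l + 1) = z)
    (hF2 : a ^ (k + 1) * z * a ^ ((k + 1) * l) = a ^ ((k + 1) * l)) :
    a ^ k * z * a ^ ((k + 1) * l + 1) = a ^ ((k + 1) * l) := by
  have comm : ∀ p q : ℕ, a ^ p * a ^ q = a ^ q * a ^ p := fun p q => by
    rw [← pow_add, ← pow_add, Nat.add_comm]
  calc a ^ k * z * a ^ ((k + 1) * l + 1)
      = a ^ k * (a ^ ((k + 1) * l) * z ^ (l + 1)) * a ^ ((k + 1) * l + 1) := by rw [hF1]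
    _ = a ^ ((k + 1) * l) * (a ^ k * (z ^ (l + 1) * a ^ ((k + 1) * l + 1))) := by
        rw [← mul_assoc (a ^ k) (a ^ ((k + 1) * l)), comm k ((k + 1) * l)]
        simp only [mul_assoc]
    _ = z * a ^ ((k + 1) * (l + 1)) * (a ^ k * (z ^ (l + 1) * a ^ ((k + 1) * l + 1))) := by
        rw [hz1]
    _ = z * (a ^ k * (a ^ (k + 1) * (a ^ ((k + 1) * l) * z ^ (l + 1) * a ^ ((k + 1) * l + 1)))) := by
        have e : a ^ ((k + 1) * (l + 1)) * a ^ k = a ^ k * (a ^ (k + 1) * a ^ ((k + 1) * l)) := by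
          rw [← pow_add, ← pow_add, ← pow_add]; congr 1; ring
        rw [mul_assoc z, ← mul_assoc (a ^ ((k + 1) * (l + 1))), e]
        simp only [mul_assoc]
    _ = z * (a ^ k * (a ^ (k + 1) * (z * a ^ ((k + 1) * l + 1)))) := by rw [hF1]
    _ = z * (a ^ k * (a ^ (k + 1) * z * a ^ ((k + 1) * l) * a)) := by
        rw [pow_succ a ((k + 1) * l)]
        simp only [mul_assoc]
    _ = z * (a ^ k * (a ^ ((k + 1) * l) * a)) := by rw [hF2]
    _ = z * a ^ ((k + 1) * (l + 1)) := by
        have e : a ^ k * (a ^ ((k + 1) * l) * a) = a ^ ((k + 1) * (l + 1)) := by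
          rw [← pow_succ, ← pow_add]; congr 1; ring
        rw [e]
    _ = a ^ ((k + 1) * l) := hz1

end part2

/-- weak core inverses of powers. -/
theorem stmt_11 {R : Type*} [Ring R] [StarRing R]
    (hProper : ∀ r : R, star r * r = 0 → r = 0)
    (a : R) (n : ℕ) (hn : 1 ≤ n) :
    (∀ (y : R) (m : ℕ), 1 ≤ m →
      y * a ^ (m + 1) = a ^ m → a * y ^ 2 = y →
      star (a ^ m) * a * y = star (a ^ m) →
      (y ^ n * (a ^ n) ^ (m + 1) = (a ^ n) ^ m ∧
        a ^ n * (y ^ n) ^ 2 = y ^ n ∧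
        star ((a ^ n) ^ m) * a ^ n * y ^ n = star ((a ^ n) ^ m))) ∧
    (∀ (z : R) (l : ℕ), 1 ≤ l →
      z * (a ^ n) ^ (l + 1) = (a ^ n) ^ l → a ^ n * z ^ 2 = z →
      star ((a ^ n) ^ l) * a ^ n * z = star ((a ^ n) ^ l) →
      ((a ^ (n - 1) * z) * a ^ (n * l + 1) = a ^ (n * l) ∧
        a * (a ^ (n - 1) * z) ^ 2 = a ^ (n - 1) * z ∧
        star (a ^ (n * l)) * a * (a ^ (n - 1) * z) = star (a ^ (n * l)))) := by
  constructor
  · intro y m hm h1 h2 h3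
    refine ⟨?_, ?_, ?_⟩
    · -- y^n * (a^n)^(m+1) = (a^n)^m
      have hm' : m ≤ n * m := Nat.le_mul_of_pos_left m hn
      obtain ⟨p, hp⟩ : ∃ p, n * m = m + p := ⟨n * m - m, by omega⟩
      rw [← pow_mul, ← pow_mul]
      have e1 : n * (m + 1) = n + (m + p) := by
        have e0 : n * (m + 1) = n * m + n := by ring
        omega
      rw [e1, hp]
      exact wci_hp2 a y m h1 n p
    · -- a^n * (y^n)^2 = y^n
      rw [← pow_mul, show n * 2 = 2 * n from by ring]
      exact wci_hp3 a y h2 n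
    · -- star part
      obtain ⟨j, rfl⟩ : ∃ j, n = j + 1 := ⟨n - 1, by omega⟩
      rw [mul_assoc, wci_hp4 a y h2 j, ← pow_mul]
      exact wci_hp5 a y m (by rw [← mul_assoc]; exact h3) j
  · intro z l hl hz1 hz2 hz3
    obtain ⟨k, rfl⟩ : ∃ k, n = k + 1 := ⟨n - 1, by omega⟩
    have hF1 : a ^ ((k + 1) * l) * z ^ (l + 1) = z := by
      have := wci_hp1 (a ^ (k + 1)) z hz2 l
      rwa [← pow_mul] at this
    have hF2 : a ^ (k + 1) * z * a ^ ((k + 1) * l) = a ^ ((k + 1) * l) := by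
      have c1 : a ^ (k + 1) * z ^ 2 * (a ^ (k + 1)) ^ (l + 1) = (a ^ (k + 1)) ^ l := by
        rw [hz2, hz1]
      have c2 : a ^ (k + 1) * z ^ 2 * (a ^ (k + 1)) ^ (l + 1) =
          a ^ (k + 1) * z * (a ^ (k + 1)) ^ l := by
        rw [sq]; simp only [mul_assoc]; rw [hz1]
      have := c2.symm.trans c1
      rwa [← pow_mul] at this
    have hz1' : z * a ^ ((k + 1) * (l + 1)) = a ^ ((k + 1) * l) := by
      rw [pow_mul, pow_mul]; exact hz1
    refine ⟨?_, ?_, ?_⟩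
    · simpa using wci_hp7 a z k l hz1' hF1 hF2
    · simpa using wci_hp6 a z k l hF1 hF2
    · simp only [Nat.add_sub_cancel]
      rw [mul_assoc, ← mul_assoc a (a ^ k) z, ← pow_succ', ← mul_assoc, pow_mul]
      exact hz3
end

section
/- Let R be a proper *-ring and let a, b ∈ R with a*b = 0, b*a = 0, and (a)* * b = 0 (where (a)* is the involution of a). If x is a weak core inverse of a with index at most k₁ and y is a weak core inverse of b with index at most k₂ (k₁, k₂ ≥ 1), then x + y is a weak core inverse of a + b with index at most max(k₁, k₂). -/
/-- From `a * x ^ 2 = x` we get `a ^ n * x ^ (n+1) = x`. -/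
lemma wci_pow_aux {R : Type*} [Ring R] (a x : R) (hx2 : a * x ^ 2 = x) :
    ∀ n : ℕ, a ^ n * x ^ (n + 1) = x := by
  intro n
  induction n with
  | zero => simp
  | succ n ih =>
    have h1 : a * x ^ (n + 2) = x ^ (n + 1) := by
      have : x ^ (n + 2) = x ^ 2 * x ^ n := by
        rw [← pow_add]; ring_nf
      rw [this, ← mul_assoc, hx2, ← pow_succ']
    calc a ^ (n + 1) * x ^ (n + 2) = a ^ n * (a * x ^ (n + 2)) := by
          rw [pow_succ, mul_assoc]
      _ = a ^ n * x ^ (n + 1) := by rw [h1]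
      _ = x := ih

/-- Key lemma: a weak core inverse `x` of `a` annihilates `b` on the right,
provided `star b * a = 0`. -/
lemma wci_key {R : Type*} [Ring R] [StarRing R] (a b x : R) (k : ℕ)
    (hx1 : x * a ^ (k + 1) = a ^ k) (hx2 : a * x ^ 2 = x)
    (hx3 : star (a ^ k) * a * x = star (a ^ k)) (hba : star b * a = 0) :
    x * b = 0 := by
  have hpow := wci_pow_aux a x hx2
  -- x * (a * x) = x
  have e : a ^ (k + 1) = a * a ^ k := pow_succ' a k
  have hxax : x * (a * x) = x := by
    calc x * (a * x) = x * (a * (a ^ k * x ^ (k + 1))) := by rw [hpow k]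
      _ = x * a ^ (k + 1) * x ^ (k + 1) := by rw [e]; noncomm_ring
      _ = a ^ k * x ^ (k + 1) := by rw [hx1]
      _ = x := hpow k
  -- a * x = a ^ (k+1) * x ^ (k+1)
  have hq : a ^ (k + 1) * x ^ (k + 1) = a * x := by
    calc a ^ (k + 1) * x ^ (k + 1) = a * (a ^ k * x ^ (k + 1)) := by
          rw [e]; noncomm_ring
      _ = a * x := by rw [hpow k]
  -- star (a ^ (k+1)) * (a * x) = star (a ^ (k+1))
  have h3' : star (a ^ (k + 1)) * (a * x) = star (a ^ (k + 1)) := by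
    have e1 : star (a ^ (k + 1)) = star a * star (a ^ k) := by
      rw [pow_succ, star_mul]
    calc star (a ^ (k + 1)) * (a * x)
        = star a * (star (a ^ k) * a * x) := by rw [e1, mul_assoc, mul_assoc]
      _ = star a * star (a ^ k) := by rw [hx3]
      _ = star (a ^ (k + 1)) := e1.symm
  -- star (a*x) * (a*x) = star (a*x)
  have hpp : star (a * x) * (a * x) = star (a * x) := by
    have e2 : star (a * x) = star (x ^ (k + 1)) * star (a ^ (k + 1)) := by
      rw [← hq, star_mul]
    calc star (a * x) * (a * x)
        = star (x ^ (k + 1)) * (star (a ^ (k + 1)) * (a * x)) := by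
          rw [e2, mul_assoc]
      _ = star (x ^ (k + 1)) * star (a ^ (k + 1)) := by rw [h3']
      _ = star (a * x) := e2.symm
  -- a * x is self-adjoint
  have hself : star (a * x) = a * x := by
    have h := congrArg star hpp
    rw [star_mul, star_star] at h
    rw [hpp] at h
    exact h
  -- star b * (a * x) = 0
  have hbp : star b * (a * x) = 0 := by
    rw [← mul_assoc, hba, zero_mul]
  -- (a * x) * b = 0
  have hpb : (a * x) * b = 0 := by
    have h := congrArg star hbp
    rw [star_mul, star_star, star_zero, hself] at h
    exact h
  calc x * b = x * (a * x) * b := by rw [hxax]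
    _ = x * ((a * x) * b) := by rw [mul_assoc]
    _ = 0 := by rw [hpb, mul_zero]

/-- `a * b = 0` gives `a * b ^ (n+1) = 0`. -/
lemma wci_mul_pow_zero {R : Type*} [Ring R] (a b : R) (hab : a * b = 0) (n : ℕ) :
    a * b ^ (n + 1) = 0 := by
  rw [pow_succ', ← mul_assoc, hab, zero_mul]

/-- binomial for orthogonal elements. -/
lemma wci_add_pow {R : Type*} [Ring R] (a b : R) (hab : a * b = 0) (hba : b * a = 0) :
    ∀ n : ℕ, (a + b) ^ (n + 1) = a ^ (n + 1) + b ^ (n + 1) := by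
  intro n
  induction n with
  | zero => simp
  | succ n ih =>
    calc (a + b) ^ (n + 2) = (a + b) * (a + b) ^ (n + 1) := by rw [pow_succ']
      _ = (a + b) * (a ^ (n + 1) + b ^ (n + 1)) := by rw [ih]
      _ = a * a ^ (n + 1) + a * b ^ (n + 1) + (b * a ^ (n + 1) + b * b ^ (n + 1)) := by
          rw [add_mul, mul_add, mul_add]
      _ = a ^ (n + 2) + b ^ (n + 2) := by
          rw [wci_mul_pow_zero a b hab, wci_mul_pow_zero b a hba, ← pow_succ', ← pow_succ']
          abel

/-- additivity of the weak core inverse. -/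
theorem stmt_12 {R : Type*} [Ring R] [StarRing R]
    (hProper : ∀ r : R, star r * r = 0 → r = 0)
    (a b x y : R) (k₁ k₂ : ℕ) (hk₁ : 1 ≤ k₁) (hk₂ : 1 ≤ k₂)
    (hab : a * b = 0) (hba : b * a = 0) (hsab : star a * b = 0)
    (hx1 : x * a ^ (k₁ + 1) = a ^ k₁) (hx2 : a * x ^ 2 = x)
    (hx3 : star (a ^ k₁) * a * x = star (a ^ k₁))
    (hy1 : y * b ^ (k₂ + 1) = b ^ k₂) (hy2 : b * y ^ 2 = y)
    (hy3 : star (b ^ k₂) * b * y = star (b ^ k₂)) :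
    (x + y) * (a + b) ^ (max k₁ k₂ + 1) = (a + b) ^ max k₁ k₂ ∧
    (a + b) * (x + y) ^ 2 = x + y ∧
    star ((a + b) ^ max k₁ k₂) * (a + b) * (x + y) =
      star ((a + b) ^ max k₁ k₂) := by
  set K := max k₁ k₂ with hKdef
  have hK1 : k₁ ≤ K := le_max_left _ _
  have hK2 : k₂ ≤ K := le_max_right _ _
  have hK : 1 ≤ K := le_trans hk₁ hK1
  -- star b * a = 0
  have hsba : star b * a = 0 := by
    have h := congrArg star hsab
    rw [star_mul, star_star, star_zero] at h
    exact h
  -- annihilation facts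
  have hxb : x * b = 0 := wci_key a b x k₁ hx1 hx2 hx3 hsba
  have hya : y * a = 0 := wci_key b a y k₂ hy1 hy2 hy3 hsab
  have hbx : b * x = 0 := by
    rw [← hx2, ← mul_assoc, hba, zero_mul]
  have hay : a * y = 0 := by
    rw [← hy2, ← mul_assoc, hab, zero_mul]
  have hxy : x * y = 0 := by
    rw [← hy2, ← mul_assoc, hxb, zero_mul]
  have hyx : y * x = 0 := by
    rw [← hx2, ← mul_assoc, hya, zero_mul]
  -- power decompositions
  obtain ⟨d₁, hd₁⟩ : ∃ d, K = k₁ + d := ⟨K - k₁, (Nat.add_sub_cancel' hK1).symm⟩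
  obtain ⟨d₂, hd₂⟩ : ∃ d, K = k₂ + d := ⟨K - k₂, (Nat.add_sub_cancel' hK2).symm⟩
  obtain ⟨m, hm⟩ : ∃ m, K = m + 1 := ⟨K - 1, (Nat.succ_pred_eq_of_pos hK).symm⟩
  -- x * a ^ (K+1) = a ^ K
  have hx1K : x * a ^ (K + 1) = a ^ K := by
    have : a ^ (K + 1) = a ^ (k₁ + 1) * a ^ d₁ := by
      rw [← pow_add]; congr 1; omega
    rw [this, ← mul_assoc, hx1, ← pow_add, ← hd₁]
  have hy1K : y * b ^ (K + 1) = b ^ K := by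
    have : b ^ (K + 1) = b ^ (k₂ + 1) * b ^ d₂ := by
      rw [← pow_add]; congr 1; omega
    rw [this, ← mul_assoc, hy1, ← pow_add, ← hd₂]
  -- generalized third conditions
  have hx3K : star (a ^ K) * a * x = star (a ^ K) := by
    have e : star (a ^ K) = star (a ^ d₁) * star (a ^ k₁) := by
      rw [← star_mul, ← pow_add, ← hd₁]
    rw [e, mul_assoc, mul_assoc, ← mul_assoc (star (a ^ k₁)), hx3]
  have hy3K : star (b ^ K) * b * y = star (b ^ K) := by
    have e : star (b ^ K) = star (b ^ d₂) * star (b ^ k₂) := by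
      rw [← star_mul, ← pow_add, ← hd₂]
    rw [e, mul_assoc, mul_assoc, ← mul_assoc (star (b ^ k₂)), hy3]
  -- cross annihilations with powers
  have hsaKb : star (a ^ K) * b = 0 := by
    have h : star b * a ^ K = 0 := by
      rw [hm, pow_succ', ← mul_assoc, hsba, zero_mul]
    have h2 := congrArg star h
    rw [star_mul, star_star, star_zero] at h2
    exact h2
  have hsbKa : star (b ^ K) * a = 0 := by
    have h : star a * b ^ K = 0 := by
      rw [hm, pow_succ', ← mul_assoc, hsab, zero_mul]
    have h2 := congrArg star h
    rw [star_mul, star_star, star_zero] at h2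
    exact h2
  -- sum power
  have hsumpow : ∀ n : ℕ, (a + b) ^ (n + 1) = a ^ (n + 1) + b ^ (n + 1) :=
    wci_add_pow a b hab hba
  have hPK : (a + b) ^ K = a ^ K + b ^ K := by rw [hm]; exact hsumpow m
  have hPK1 : (a + b) ^ (K + 1) = a ^ (K + 1) + b ^ (K + 1) := hsumpow K
  refine ⟨?_, ?_, ?_⟩
  · -- condition 1
    rw [hPK1, hPK, add_mul, mul_add, mul_add]
    have h1 : x * b ^ (K + 1) = 0 := by
      rw [pow_succ', ← mul_assoc, hxb, zero_mul]
    have h2 : y * a ^ (K + 1) = 0 := by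
      rw [pow_succ', ← mul_assoc, hya, zero_mul]
    rw [hx1K, hy1K, h1, h2]
    abel
  · -- condition 2
    have hsq : (x + y) ^ 2 = x ^ 2 + y ^ 2 := by
      have h4 : (x + y) ^ 2 = x * x + x * y + (y * x + y * y) := by
        rw [pow_two, add_mul, mul_add, mul_add]
      rw [h4, hxy, hyx, ← pow_two, ← pow_two]
      abel
    rw [hsq, add_mul, mul_add, mul_add]
    have h1 : a * y ^ 2 = 0 := by
      rw [pow_two, ← mul_assoc, hay, zero_mul]
    have h2 : b * x ^ 2 = 0 := by
      rw [pow_two, ← mul_assoc, hbx, zero_mul]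
    rw [hx2, hy2, h1, h2]
    abel
  · -- condition 3
    rw [hPK, star_add, add_mul, add_mul, mul_add, mul_add]
    have t1 : star (a ^ K) * a * x = star (a ^ K) := hx3K
    have t2 : star (a ^ K) * a * y = 0 := by
      rw [mul_assoc, hay, mul_zero]
    have t3 : star (a ^ K) * b * x = 0 := by
      rw [hsaKb, zero_mul]
    have t4 : star (a ^ K) * b * y = 0 := by
      rw [hsaKb, zero_mul]
    have t5 : star (b ^ K) * a * x = 0 := by
      rw [hsbKa, zero_mul]
    have t6 : star (b ^ K) * a * y = 0 := by
      rw [hsbKa, zero_mul]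
    have t7 : star (b ^ K) * b * x = 0 := by
      rw [mul_assoc, hbx, mul_zero]
    have t8 : star (b ^ K) * b * y = star (b ^ K) := hy3K
    simp only [add_mul, mul_add, ← mul_assoc] at *
    rw [t1, t2, t3, t4, t5, t6, t7, t8]
    abel
end

section
/- Let R be a proper *-ring, let a, x ∈ R, and let k ≥ 1 be an integer. If x is a central weak core inverse of a with index at most k, then: (i) a*x² = x; (ii) a*x = x*a; (iii) x²*a = x; (iv) x*a²*x = a*x. -/
/-- basic properties of the central weak core inverse. -/
theorem stmt_13 {R : Type*} [Ring R] [StarRing R]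
    (hProper : ∀ r : R, star r * r = 0 → r = 0)
    (a x : R) (k : ℕ) (hk : 1 ≤ k)
    (hc : ∀ t : R, (a * x) * t = t * (a * x))
    (h1 : x * a ^ (k + 1) = a ^ k) (h2 : x * a * x = x)
    (h3 : star (a * x) = a * x) :
    a * x ^ 2 = x ∧ a * x = x * a ∧ x ^ 2 * a = x ∧ x * a ^ 2 * x = a * x := by
  -- (i)
  have hi : a * x ^ 2 = x := by
    have hct := hc x
    calc a * x ^ 2 = (a * x) * x := by noncomm_ring
      _ = x * (a * x) := hct
      _ = x * a * x := by noncomm_ring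
      _ = x := h2
  -- x = a^n * x^(n+1) for all n
  have hx : ∀ n : ℕ, a ^ n * x ^ (n + 1) = x := by
    intro n
    induction n with
    | zero => simp
    | succ n ih =>
      have h2n : x ^ (n + 2) = x ^ 2 * x ^ n := by
        rw [show n + 2 = 2 + n from Nat.add_comm n 2, pow_add]
      calc a ^ (n + 1) * x ^ (n + 2) = a ^ n * ((a * x ^ 2) * x ^ n) := by
            rw [pow_succ, h2n]; simp [mul_assoc]
        _ = a ^ n * (x * x ^ n) := by rw [hi]
        _ = a ^ n * x ^ (n + 1) := by rw [← pow_succ']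
        _ = x := ih
  -- a^k * (a*x) = a^k
  have hae : a ^ k * (a * x) = a ^ k := by
    calc a ^ k * (a * x) = (x * a ^ (k + 1)) * (a * x) := by rw [h1]
      _ = x * ((a * x) * a ^ (k + 1)) := by rw [mul_assoc, hc (a ^ (k + 1))]
      _ = (x * a * x) * a ^ (k + 1) := by noncomm_ring
      _ = x * a ^ (k + 1) := by rw [h2]
      _ = a ^ k := h1
  -- (a*x) * a^k = a^k
  have hae' : (a * x) * a ^ k = a ^ k := by rw [hc (a ^ k), hae]
  -- (x*a) * a^k = a^k
  have hf : (x * a) * a ^ k = a ^ k := by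
    rw [mul_assoc, ← pow_succ', h1]
  -- d = x*a - a*x
  set d := x * a - a * x with hd
  have hda : d * a ^ k = 0 := by
    rw [hd, sub_mul, hf, hae', sub_self]
  have hde : d * (a * x) = d := by
    rw [← hc d]
    calc (a * x) * d = ((a * x) * x) * a - a * (x * a * x) := by
          rw [hd]; simp [mul_sub, mul_assoc]
      _ = (a * x ^ 2) * a - a * (x * a * x) := by rw [sq]; simp [mul_assoc]
      _ = x * a - a * x := by rw [hi, h2]
      _ = d := hd.symm
  have hd0 : d = 0 := by
    have hxk := hx k
    calc d = d * (a * x) := hde.symm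
      _ = d * (a * (a ^ k * x ^ (k + 1))) := by rw [hxk]
      _ = ((d * a ^ k) * a) * x ^ (k + 1) := by
          have hca : a * a ^ k = a ^ k * a := by rw [← pow_succ', pow_succ]
          rw [← mul_assoc a, hca]; simp [mul_assoc]
      _ = 0 := by rw [hda, zero_mul, zero_mul]
  have hii : a * x = x * a := (sub_eq_zero.mp hd0).symm
  refine ⟨hi, hii, ?_, ?_⟩
  · calc x ^ 2 * a = x * (x * a) := by noncomm_ring
      _ = x * (a * x) := by rw [← hii]
      _ = x * a * x := by noncomm_ring
      _ = x := h2
  · calc x * a ^ 2 * x = (x * a) * (a * x) := by noncomm_ring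
      _ = (a * x) * (a * x) := by rw [← hii]
      _ = a * (x * a * x) := by noncomm_ring
      _ = a * x := by rw [h2]
end

section
/- Let R be a proper *-ring, let a ∈ R, and let k ≥ 1 be an integer. If x and y are both central weak core inverses of a with index at most k, then x = y. -/
/-- uniqueness of the central weak core inverse. -/
theorem stmt_14 {R : Type*} [Ring R] [StarRing R]
    (hProper : ∀ r : R, star r * r = 0 → r = 0)
    (a x y : R) (k : ℕ) (hk : 1 ≤ k)
    (hxc : ∀ t : R, (a * x) * t = t * (a * x))
    (hx1 : x * a ^ (k + 1) = a ^ k) (hx2 : x * a * x = x)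
    (hx3 : star (a * x) = a * x)
    (hyc : ∀ t : R, (a * y) * t = t * (a * y))
    (hy1 : y * a ^ (k + 1) = a ^ k) (hy2 : y * a * y = y)
    (hy3 : star (a * y) = a * y) :
    x = y := by
  -- general facts for any central weak core inverse u
  have key : ∀ u : R, (∀ t : R, (a * u) * t = t * (a * u)) →
      u * a ^ (k + 1) = a ^ k → u * a * u = u →
      ((a * u) * u = u ∧ (a * u) * a ^ k = a ^ k ∧
        (∀ m : ℕ, (a * u) ^ (m + 1) = a ^ (m + 1) * u ^ (m + 1)) ∧
        (∀ m : ℕ, (a * u) ^ (m + 1) = a * u)) := by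
    intro u hc h1 h2
    have hidem : (a * u) * (a * u) = a * u := by
      rw [mul_assoc, ← mul_assoc u a u, h2]
    have heu : (a * u) * u = u := by
      rw [hc u, ← mul_assoc, h2]
    refine ⟨heu, ?_, ?_, ?_⟩
    · rw [← h1, ← mul_assoc, heu, h1]
    · intro m
      induction m with
      | zero => simp
      | succ n ih =>
        rw [pow_succ, ih]
        calc a ^ (n + 1) * u ^ (n + 1) * (a * u)
            = a ^ (n + 1) * (u ^ (n + 1) * (a * u)) := by rw [mul_assoc]
          _ = a ^ (n + 1) * ((a * u) * u ^ (n + 1)) := by rw [hc (u ^ (n + 1))]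
          _ = a ^ (n + 1) * a * (u * u ^ (n + 1)) := by
              rw [← mul_assoc (a ^ (n + 1)) (a * u) (u ^ (n + 1)),
                ← mul_assoc (a ^ (n + 1)) a u,
                mul_assoc (a ^ (n + 1) * a) u (u ^ (n + 1))]
          _ = a ^ (n + 1 + 1) * u ^ (n + 1 + 1) := by
              rw [← pow_succ a, ← pow_succ' u]
    · intro m
      induction m with
      | zero => simp
      | succ n ih => rw [pow_succ, ih, hidem]
  obtain ⟨hex, heak, hepow, hepow1⟩ := key x hxc hx1 hx2
  obtain ⟨hfy, hfak, hfpow, hfpow1⟩ := key y hyc hy1 hy2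
  have hidemx : (a * x) * (a * x) = a * x := by
    rw [mul_assoc, ← mul_assoc x a x, hx2]
  obtain ⟨j, rfl⟩ : ∃ j, k = j + 1 := ⟨k - 1, (Nat.succ_pred_eq_of_pos hk).symm⟩
  -- a*u = (a*u)*(a*v) for central idempotents with the a^k-absorbing property
  have hef : ∀ u v : R, (∀ t : R, (a * u) * t = t * (a * u)) →
      (a * u) * (a * u) = a * u → (a * u) * a ^ (j + 1) = a ^ (j + 1) →
      (a * v) * a ^ (j + 1) = a ^ (j + 1) →
      (a * u) ^ (j + 1) = a ^ (j + 1) * u ^ (j + 1) →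
      ((a * u) ^ (j + 1) = a * u) →
      a * u = (a * u) * (a * v) := by
    intro u v hc hid huk hvk hp hp1
    set z : R := a * u - (a * u) * (a * v) with hz
    have hzak : z * a ^ (j + 1) = 0 := by
      rw [hz, sub_mul, huk, mul_assoc, hvk, huk, sub_self]
    have hze : z * (a * u) = z := by
      rw [hz, sub_mul, hid, mul_assoc, ← hc (a * v), ← mul_assoc, hid]
    have hz0 : z = 0 := by
      have h : z = z * (a ^ (j + 1) * u ^ (j + 1)) := by
        rw [← hp, hp1, hze]
      rw [h, ← mul_assoc, hzak, zero_mul]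
    exact sub_eq_zero.mp hz0
  have hxy : a * x = (a * x) * (a * y) :=
    hef x y hxc hidemx heak hfak (hepow j) (hepow1 j)
  have hidemy : (a * y) * (a * y) = a * y := by
    rw [mul_assoc, ← mul_assoc y a y, hy2]
  have hyx : a * y = (a * y) * (a * x) :=
    hef y x hyc hidemy hfak heak (hfpow j) (hfpow1 j)
  have heqf : a * x = a * y := by
    rw [hxy, hxc (a * y), ← hyx]
  -- now finish: x - y = (x-y)*(a*x) = (x-y)*a^(k+1)*x^(k+1) = 0
  have hxe : x * (a * x) = x := by rw [← mul_assoc, hx2]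
  have hye : y * (a * x) = y := by rw [heqf, ← mul_assoc, hy2]
  have hde : (x - y) * (a * x) = x - y := by rw [sub_mul, hxe, hye]
  have hdak : (x - y) * a ^ (j + 1 + 1) = 0 := by
    rw [sub_mul, hx1, hy1, sub_self]
  have h0 : x - y = 0 := by
    have h : x - y = (x - y) * (a ^ (j + 1 + 1) * x ^ (j + 1 + 1)) := by
      rw [← hepow (j + 1), hepow1 (j + 1), hde]
    rw [h, ← mul_assoc, hdak, zero_mul]
  exact sub_eq_zero.mp h0
end

section
/- Let R be a proper *-ring, let a, x, b ∈ R, and let k ≥ 1 be an integer. Suppose x is a central weak core inverse of a with index at most k and let m ≥ k. If a^m * b ∈ C(R) or b * a^m ∈ C(R), then a^m * b = b * a^m. -/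
/-- centrality of `a^m * b` or `b * a^m` forces commutation. -/
theorem stmt_15 {R : Type*} [Ring R] [StarRing R]
    (hProper : ∀ r : R, star r * r = 0 → r = 0)
    (a x b : R) (k m : ℕ) (hk : 1 ≤ k) (hm : k ≤ m)
    (hc : ∀ t : R, (a * x) * t = t * (a * x))
    (h1 : x * a ^ (k + 1) = a ^ k) (h2 : x * a * x = x)
    (h3 : star (a * x) = a * x)
    (hb : (∀ t : R, (a ^ m * b) * t = t * (a ^ m * b)) ∨
      (∀ t : R, (b * a ^ m) * t = t * (b * a ^ m))) :
    a ^ m * b = b * a ^ m := by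
  have h2' : x * (a * x) = x := by rw [← mul_assoc]; exact h2
  -- a^(j+1) * x^(j+1) = a * x
  have hax : ∀ j : ℕ, a ^ (j + 1) * x ^ (j + 1) = a * x := by
    intro j
    induction j with
    | zero => simp
    | succ n ih =>
      calc a ^ (n + 2) * x ^ (n + 2)
          = a ^ (n + 1) * ((a * x) * x ^ (n + 1)) := by
            rw [pow_succ a (n + 1), pow_succ' x (n + 1)]
            rw [mul_assoc, ← mul_assoc a x (x ^ (n + 1))]
        _ = a ^ (n + 1) * (x ^ (n + 1) * (a * x)) := by rw [hc]
        _ = (a ^ (n + 1) * x ^ (n + 1)) * (a * x) := by rw [mul_assoc]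
        _ = (a * x) * (a * x) := by rw [ih]
        _ = a * x := by rw [mul_assoc, h2']
  have hk' : a ^ k * x ^ k = a * x := by
    obtain ⟨j, rfl⟩ := Nat.exists_eq_add_of_le hk
    have : 1 + j = j + 1 := by omega
    rw [this]; exact hax j
  -- the key commutation: x * a = a * x
  have hxa : x * a = a * x := by
    have e2 : x * a ^ (k + 1) * x ^ k = x * a * (a * x) := by
      rw [pow_succ' a k, ← mul_assoc x a (a ^ k), mul_assoc (x * a) (a ^ k) (x ^ k), hk']
    have e3 : x * a * (a * x) = x * a := by
      rw [mul_assoc x a (a * x), ← hc a, ← mul_assoc, h2']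
    calc x * a = x * a * (a * x) := e3.symm
      _ = x * a ^ (k + 1) * x ^ k := e2.symm
      _ = a ^ k * x ^ k := by rw [h1]
      _ = a * x := hk'
  -- x^(j+1) * a^(j+1) = a * x
  have hxa' : ∀ j : ℕ, x ^ (j + 1) * a ^ (j + 1) = a * x := by
    intro j
    induction j with
    | zero => simpa using hxa
    | succ n ih =>
      calc x ^ (n + 2) * a ^ (n + 2)
          = x * (x ^ (n + 1) * a ^ (n + 1)) * a := by
            rw [pow_succ' x (n + 1), pow_succ a (n + 1)]
            simp only [mul_assoc]
        _ = x * (a * x) * a := by rw [ih]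
        _ = x * a := by rw [mul_assoc x (a * x) a, ← mul_assoc x (a * x) a, h2']
        _ = a * x := hxa
  have hm1 : 1 ≤ m := le_trans hk hm
  have hamxm : a ^ m * x ^ m = a * x := by
    obtain ⟨j, rfl⟩ := Nat.exists_eq_add_of_le hm1
    have : 1 + j = j + 1 := by omega
    rw [this]; exact hax j
  have hxmam : x ^ m * a ^ m = a * x := by
    obtain ⟨j, rfl⟩ := Nat.exists_eq_add_of_le hm1
    have : 1 + j = j + 1 := by omega
    rw [this]; exact hxa' j
  -- (a*x) * a^k = a^k
  have heak : (a * x) * a ^ k = a ^ k := by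
    calc (a * x) * a ^ k = (x * a) * a ^ k := by rw [hxa]
      _ = x * (a * a ^ k) := by rw [mul_assoc]
      _ = x * a ^ (k + 1) := by rw [← pow_succ' a k]
      _ = a ^ k := h1
  -- (a*x) * a^m = a^m
  have hek : (a * x) * a ^ m = a ^ m := by
    obtain ⟨j, rfl⟩ := Nat.exists_eq_add_of_le hm
    calc (a * x) * a ^ (k + j) = (a * x) * (a ^ k * a ^ j) := by rw [pow_add]
      _ = ((a * x) * a ^ k) * a ^ j := by simp only [mul_assoc]
      _ = a ^ k * a ^ j := by rw [heak]
      _ = a ^ (k + j) := by rw [← pow_add]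
  have ham : a ^ m * (a * x) = a ^ m := by rw [← hc (a ^ m)]; exact hek
  rcases hb with hc1 | hc2
  · calc a ^ m * b
        = (a * x) * (a ^ m * b) := by rw [← mul_assoc, hek]
      _ = (x ^ m * a ^ m) * (a ^ m * b) := by rw [hxmam]
      _ = x ^ m * (a ^ m * (a ^ m * b)) := by rw [mul_assoc]
      _ = x ^ m * ((a ^ m * b) * a ^ m) := by rw [← hc1 (a ^ m)]
      _ = x ^ m * (a ^ m * (b * a ^ m)) := by rw [mul_assoc (a ^ m) b (a ^ m)]
      _ = (x ^ m * a ^ m) * (b * a ^ m) := by rw [mul_assoc]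
      _ = (a * x) * (b * a ^ m) := by rw [hxmam]
      _ = (b * a ^ m) * (a * x) := hc _
      _ = b * (a ^ m * (a * x)) := by rw [mul_assoc]
      _ = b * a ^ m := by rw [ham]
  · calc a ^ m * b
        = (a ^ m * (a * x)) * b := by rw [ham]
      _ = a ^ m * ((a * x) * b) := by rw [mul_assoc]
      _ = a ^ m * (b * (a * x)) := by rw [hc b]
      _ = (a ^ m * b) * (a * x) := by rw [← mul_assoc]
      _ = (a ^ m * b) * (a ^ m * x ^ m) := by rw [hamxm]
      _ = (a ^ m * (b * a ^ m)) * x ^ m := by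
          simp only [mul_assoc]
      _ = ((b * a ^ m) * a ^ m) * x ^ m := by rw [← hc2 (a ^ m)]
      _ = (b * a ^ m) * (a ^ m * x ^ m) := by rw [mul_assoc]
      _ = (b * a ^ m) * (a * x) := by rw [hamxm]
      _ = b * (a ^ m * (a * x)) := by rw [mul_assoc]
      _ = b * a ^ m := by rw [ham]
end

section
/- Let R be a proper *-ring, let a, x ∈ R, and let k ≥ 1 be an integer. If x is a central weak core inverse of a with index at most k, then a²*x is a central weak core inverse of x with index at most k; that is, x*(a²*x) ∈ C(R), (a²*x)*x^(k+1) = x^k, (a²*x)*x*(a²*x) = a²*x, and (x*(a²*x))* = x*(a²*x). -/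
/-- if `x` is a central weak core inverse of `a` with index at most `k`,
then `a²*x` is a central weak core inverse of `x` with index at most `k`. -/
theorem stmt_16 {R : Type*} [Ring R] [StarRing R]
    (hProper : ∀ r : R, star r * r = 0 → r = 0)
    (a x : R) (k : ℕ) (hk : 1 ≤ k)
    (hc : ∀ t : R, (a * x) * t = t * (a * x))
    (h1 : x * a ^ (k + 1) = a ^ k) (h2 : x * a * x = x)
    (h3 : star (a * x) = a * x) :
    (∀ t : R, (x * (a ^ 2 * x)) * t = t * (x * (a ^ 2 * x))) ∧
    (a ^ 2 * x) * x ^ (k + 1) = x ^ k ∧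
    (a ^ 2 * x) * x * (a ^ 2 * x) = a ^ 2 * x ∧
    star (x * (a ^ 2 * x)) = x * (a ^ 2 * x) := by
  have hex : (a * x) * x = x := by
    rw [hc x, ← mul_assoc]; exact h2
  have hax2 : a * (x * x) = x := by
    rw [← mul_assoc]; exact hex
  have hee : (a * x) * (a * x) = a * x := by
    rw [mul_assoc, ← mul_assoc x a x, h2]
  have hef : (a * x) * (x * a) = x * a := by
    rw [← mul_assoc, hex]
  have hfe' : (x * a) * (a * x) = x * a := (hc (x * a)).symm.trans hef
  have hfak : (x * a) * a ^ k = a ^ k := by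
    rw [mul_assoc, ← pow_succ', h1]
  have heak : (a * x) * a ^ k = a ^ k := by
    calc (a * x) * a ^ k = (a * x) * ((x * a) * a ^ k) := by rw [hfak]
      _ = ((a * x) * (x * a)) * a ^ k := (mul_assoc _ _ _).symm
      _ = (x * a) * a ^ k := by rw [hef]
      _ = a ^ k := hfak
  have aux : ∀ n : ℕ, a ^ (n + 1) * x ^ (n + 1) = a * x := by
    intro n
    induction n with
    | zero => simp
    | succ m ih =>
      calc a ^ (m + 2) * x ^ (m + 2)
          = a * ((a ^ (m + 1) * x ^ (m + 1)) * x) := by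
            rw [pow_succ' a (m + 1), pow_succ x (m + 1)]
            noncomm_ring
        _ = a * ((a * x) * x) := by rw [ih]
        _ = a * x := by rw [hex]
  have hakxk : a ^ k * x ^ k = a * x := by
    have := aux (k - 1)
    rwa [Nat.sub_add_cancel hk] at this
  have hfe : x * a = a * x := by
    have h5 : ((a * x) - x * a) * a ^ k = 0 := by
      rw [sub_mul, heak, hfak, sub_self]
    have h6 : a * x - x * a = (a * x - x * a) * (a ^ k * x ^ k) := by
      rw [hakxk, sub_mul, hee, hfe']
    have h7 : a * x - x * a = 0 := by
      rw [h6, ← mul_assoc, h5, zero_mul]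
    exact (sub_eq_zero.mp h7).symm
  have hkey : x * (a ^ 2 * x) = a * x := by
    calc x * (a ^ 2 * x) = (x * a) * (a * x) := by noncomm_ring
      _ = (a * x) * (a * x) := by rw [hfe]
      _ = a * x := hee
  have haxn : ∀ n : ℕ, a * x ^ (n + 2) = x ^ (n + 1) := by
    intro n
    calc a * x ^ (n + 2) = a * (x * (x * x ^ n)) := by
          rw [pow_succ' x (n + 1), pow_succ' x n]
      _ = ((a * x) * x) * x ^ n := by rw [← mul_assoc, ← mul_assoc]
      _ = x * x ^ n := by rw [hex]
      _ = x ^ (n + 1) := (pow_succ' x n).symm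
  refine ⟨?_, ?_, ?_, ?_⟩
  · intro t; rw [hkey]; exact hc t
  · obtain ⟨m, rfl⟩ : ∃ m, k = m + 1 := ⟨k - 1, (Nat.succ_pred_eq_of_pos hk).symm⟩
    calc (a ^ 2 * x) * x ^ (m + 1 + 1)
        = a * (a * (x * x ^ (m + 2))) := by noncomm_ring
      _ = a * (a * x ^ (m + 3)) := by rw [← pow_succ']
      _ = a * x ^ (m + 2) := by rw [haxn (m + 1)]
      _ = x ^ (m + 1) := haxn m
  · have h7 : (a ^ 2 * x) * x = a * x := by
      calc (a ^ 2 * x) * x = a * (a * (x * x)) := by noncomm_ring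
        _ = a * x := by rw [hax2]
    rw [h7]
    calc (a * x) * (a ^ 2 * x) = ((a * x) * a ^ 2) * x := (mul_assoc _ _ _).symm
      _ = (a ^ 2 * (a * x)) * x := by rw [hc (a ^ 2)]
      _ = a ^ 2 * ((a * x) * x) := mul_assoc _ _ _
      _ = a ^ 2 * x := by rw [hex]
  · rw [hkey]; exact h3
end

section
/- Let R be a proper *-ring, let a ∈ R, and let k ≥ 1 be an integer. Suppose d is a central Drazin inverse of a with index at most k and x is a {1,3}-inverse of a^k. Then d*a^k*x is a central weak core inverse of a with index at most k, and moreover a*(d*a^k*x) = a^k*x. -/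
/-- a central weak core inverse built from a central Drazin inverse
and a {1,3}-inverse. -/
theorem stmt_17 {R : Type*} [Ring R] [StarRing R]
    (hProper : ∀ r : R, star r * r = 0 → r = 0)
    (a d x : R) (k : ℕ) (hk : 1 ≤ k)
    (hdc : ∀ t : R, (d * a) * t = t * (d * a))
    (hd1 : d * a * d = d) (hd2 : a ^ (k + 1) * d = a ^ k)
    (hx1 : a ^ k * x * a ^ k = a ^ k) (hx2 : star (a ^ k * x) = a ^ k * x) :
    (∀ t : R, (a * (d * a ^ k * x)) * t = t * (a * (d * a ^ k * x))) ∧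
    (d * a ^ k * x) * a ^ (k + 1) = a ^ k ∧
    (d * a ^ k * x) * a * (d * a ^ k * x) = d * a ^ k * x ∧
    star (a * (d * a ^ k * x)) = a * (d * a ^ k * x) ∧
    a * (d * a ^ k * x) = a ^ k * x := by
  obtain ⟨m, rfl⟩ : ∃ m, k = m + 1 := ⟨k - 1, by omega⟩
  -- v := d*a is idempotent
  have hidem : d * a * (d * a) = d * a := by
    rw [← mul_assoc, hd1]
  -- d^(n+1) * a^(n+1) = d*a
  have hdk : ∀ n : ℕ, d ^ (n + 1) * a ^ (n + 1) = d * a := by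
    intro n
    induction n with
    | zero => simp
    | succ n ih =>
      rw [pow_succ d (n + 1), pow_succ' a (n + 1),
        mul_assoc (d ^ (n + 1)) d (a * a ^ (n + 1)),
        ← mul_assoc d a (a ^ (n + 1)), hdc (a ^ (n + 1)),
        ← mul_assoc (d ^ (n + 1)) (a ^ (n + 1)) (d * a), ih, hidem]
  -- a^(n+1) * d = a^n for n ≥ m+1
  have hF : ∀ n : ℕ, m + 1 ≤ n → a ^ (n + 1) * d = a ^ n := by
    intro n hn
    obtain ⟨j, rfl⟩ : ∃ j, n = j + (m + 1) := ⟨n - (m + 1), by omega⟩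
    rw [show j + (m + 1) + 1 = j + (m + 1 + 1) by omega, pow_add a j (m + 1 + 1),
      mul_assoc, hd2, ← pow_add]
  -- a^(m+1+j) * d^j = a^(m+1)
  have hE : ∀ j : ℕ, a ^ (m + 1 + j) * d ^ j = a ^ (m + 1) := by
    intro j
    induction j with
    | zero => simp
    | succ j ih =>
      rw [show m + 1 + (j + 1) = m + 1 + j + 1 by omega, pow_succ' d j,
        ← mul_assoc, hF (m + 1 + j) (by omega), ih]
  -- v * a^(2(m+1)) = a^(2(m+1))
  have h3 : d * a * a ^ (m + 1 + (m + 1)) = a ^ (m + 1 + (m + 1)) := by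
    rw [show m + 1 + (m + 1) = m + 1 + m + 1 by omega, hdc, ← mul_assoc,
      hF (m + 1 + m) (by omega), ← pow_succ]
  -- v * a^(m+1) = a^(m+1)
  have h5 : d * a * a ^ (m + 1) = a ^ (m + 1) := by
    conv_lhs => rw [← hE (m + 1)]
    rw [← mul_assoc, h3, hE (m + 1)]
  -- v * (a*d) = v
  have hvad : d * a * (a * d) = d * a := by
    conv_lhs => rw [← hdk m]
    rw [mul_assoc, ← mul_assoc (a ^ (m + 1)) a d, ← pow_succ a (m + 1), hd2, hdk]
  -- a * (d^(n+1) * v) = d^n * v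
  have hD : ∀ n : ℕ, a * (d ^ (n + 1) * (d * a)) = d ^ n * (d * a) := by
    intro n
    rw [← hdc (d ^ (n + 1)), ← mul_assoc a (d * a) (d ^ (n + 1)), ← hdc a,
      mul_assoc (d * a) a (d ^ (n + 1)), pow_succ' d n, ← mul_assoc a d (d ^ n),
      ← mul_assoc (d * a) (a * d) (d ^ n), hvad, hdc (d ^ n)]
  -- a^n * d^n * v = v
  have h6 : ∀ n : ℕ, a ^ n * d ^ n * (d * a) = d * a := by
    intro n
    induction n with
    | zero => simp
    | succ n ih =>
      rw [pow_succ a n, mul_assoc (a ^ n) a (d ^ (n + 1)),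
        mul_assoc (a ^ n) (a * d ^ (n + 1)) (d * a),
        mul_assoc a (d ^ (n + 1)) (d * a), hD n,
        ← mul_assoc (a ^ n) (d ^ n) (d * a), ih]
  -- (a^(m+1)*x) * v = a^(m+1)*x
  have hxv : a ^ (m + 1) * x * (d * a) = a ^ (m + 1) * x := by
    rw [← hdc (a ^ (m + 1) * x), ← mul_assoc (d * a) (a ^ (m + 1)) x, h5]
  -- (v - a^(m+1)*x) * a^(m+1) = 0
  have hsub : (d * a - a ^ (m + 1) * x) * a ^ (m + 1) = 0 := by
    rw [sub_mul, h5, hx1, sub_self]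
  -- S * v = S
  have hS1 : (d * a - a ^ (m + 1) * x) * (d * a) = d * a - a ^ (m + 1) * x := by
    rw [sub_mul, hidem, hxv]
  have h2 : (d * a - a ^ (m + 1) * x) * (a ^ (m + 1) * d ^ (m + 1) * (d * a)) = 0 := by
    rw [show a ^ (m + 1) * d ^ (m + 1) * (d * a)
        = a ^ (m + 1) * (d ^ (m + 1) * (d * a)) from mul_assoc _ _ _,
      ← mul_assoc, hsub, zero_mul]
  have h4 : d * a - a ^ (m + 1) * x = 0 := by
    rw [h6 (m + 1)] at h2
    rw [← hS1]
    exact h2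
  -- KEY: d*a = a^(m+1)*x
  have hkey : d * a = a ^ (m + 1) * x := sub_eq_zero.mp h4
  -- a * (d * a^(m+1)) = a^(m+1)
  have hada' : a * (d * a ^ (m + 1)) = a ^ (m + 1) := by
    rw [pow_succ' a m, ← mul_assoc d a (a ^ m), ← mul_assoc a (d * a) (a ^ m),
      ← hdc a, mul_assoc (d * a) a (a ^ m), ← pow_succ' a m, h5]
  have hada : a * (d * a ^ (m + 1) * x) = a ^ (m + 1) * x := by
    rw [← mul_assoc a (d * a ^ (m + 1)) x, hada']
  refine ⟨?_, ?_, ?_, ?_, hada⟩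
  · intro t
    rw [hada, ← hkey]
    exact hdc t
  · rw [pow_succ a (m + 1)]
    rw [mul_assoc (d * a ^ (m + 1)) x (a ^ (m + 1) * a),
      ← mul_assoc x (a ^ (m + 1)) a,
      ← mul_assoc (d * a ^ (m + 1)) (x * a ^ (m + 1)) a,
      ← mul_assoc (d * a ^ (m + 1)) x (a ^ (m + 1)),
      mul_assoc d (a ^ (m + 1)) x, mul_assoc d (a ^ (m + 1) * x) (a ^ (m + 1)),
      hx1, mul_assoc d (a ^ (m + 1)) a, ← pow_succ a (m + 1),
      pow_succ' a (m + 1), ← mul_assoc d a (a ^ (m + 1)), h5]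
  · rw [mul_assoc (d * a ^ (m + 1) * x) a (d * a ^ (m + 1) * x), hada,
      mul_assoc (d * a ^ (m + 1)) x (a ^ (m + 1) * x),
      ← mul_assoc x (a ^ (m + 1)) x,
      ← mul_assoc (d * a ^ (m + 1)) (x * a ^ (m + 1)) x,
      ← mul_assoc (d * a ^ (m + 1)) x (a ^ (m + 1)),
      mul_assoc d (a ^ (m + 1)) x,
      mul_assoc d (a ^ (m + 1) * x) (a ^ (m + 1)), hx1, mul_assoc]
  · rw [hada]
    exact hx2
end

section
/- Let R be a ring and let a, b ∈ R with a*b = 0 and b*a = 0. If c is a central Drazin inverse of a with index at most k₁ and d is a central Drazin inverse of b with index at most k₂ (k₁, k₂ ≥ 1), then c + d is a central Drazin inverse of a + b with index at most max(k₁, k₂). -/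
/-- additivity of the central Drazin inverse. -/
theorem stmt_18 {R : Type*} [Ring R]
    (a b c d : R) (k₁ k₂ : ℕ) (hk₁ : 1 ≤ k₁) (hk₂ : 1 ≤ k₂)
    (hab : a * b = 0) (hba : b * a = 0)
    (hcc : ∀ t : R, (c * a) * t = t * (c * a))
    (hc1 : c * a * c = c) (hc2 : a ^ (k₁ + 1) * c = a ^ k₁)
    (hdc : ∀ t : R, (d * b) * t = t * (d * b))
    (hd1 : d * b * d = d) (hd2 : b ^ (k₂ + 1) * d = b ^ k₂) :
    (∀ t : R, ((c + d) * (a + b)) * t = t * ((c + d) * (a + b))) ∧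
    (c + d) * (a + b) * (c + d) = c + d ∧
    (a + b) ^ (max k₁ k₂ + 1) * (c + d) = (a + b) ^ max k₁ k₂ := by
  have hbc : b * c = 0 := by
    calc b * c = b * (c * a * c) := by rw [hc1]
    _ = b * (c * a) * c := by rw [← mul_assoc b (c * a) c]
    _ = (c * a) * b * c := by rw [← hcc b]
    _ = c * (a * b) * c := by rw [mul_assoc c a b]
    _ = 0 := by rw [hab, mul_zero, zero_mul]
  have hcb : c * b = 0 := by
    calc c * b = (c * a * c) * b := by rw [hc1]
    _ = (c * (c * a)) * b := by rw [hcc c]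
    _ = c * c * (a * b) := by rw [← mul_assoc, mul_assoc (c * c)]
    _ = 0 := by rw [hab, mul_zero]
  have had : a * d = 0 := by
    calc a * d = a * (d * b * d) := by rw [hd1]
    _ = a * (d * b) * d := by rw [← mul_assoc a (d * b) d]
    _ = (d * b) * a * d := by rw [← hdc a]
    _ = d * (b * a) * d := by rw [mul_assoc d b a]
    _ = 0 := by rw [hba, mul_zero, zero_mul]
  have hda : d * a = 0 := by
    calc d * a = (d * b * d) * a := by rw [hd1]
    _ = (d * (d * b)) * a := by rw [hdc d]
    _ = d * d * (b * a) := by rw [← mul_assoc, mul_assoc (d * d)]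
    _ = 0 := by rw [hba, mul_zero]
  have hkey : (c + d) * (a + b) = c * a + d * b := by
    rw [add_mul, mul_add, mul_add, hcb, hda, add_zero, zero_add]
  have hpowb : ∀ n : ℕ, a ^ (n + 1) * b = 0 := by
    intro n
    induction n with
    | zero => simpa using hab
    | succ n ih => rw [pow_succ, mul_assoc, hab, mul_zero]
  have hpowa : ∀ n : ℕ, b ^ (n + 1) * a = 0 := by
    intro n
    induction n with
    | zero => simpa using hba
    | succ n ih => rw [pow_succ, mul_assoc, hba, mul_zero]
  have hsum : ∀ n : ℕ, (a + b) ^ (n + 1) = a ^ (n + 1) + b ^ (n + 1) := by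
    intro n
    induction n with
    | zero => simp
    | succ n ih =>
      rw [pow_succ, ih, add_mul, mul_add, mul_add, hpowb n, hpowa n,
        add_zero, zero_add, ← pow_succ, ← pow_succ]
  have hextc : ∀ m : ℕ, k₁ ≤ m → a ^ (m + 1) * c = a ^ m := by
    intro m hm
    induction m, hm using Nat.le_induction with
    | base => exact hc2
    | succ m hm ih =>
      rw [pow_succ' a (m + 1), mul_assoc, ih, ← pow_succ']
  have hextd : ∀ m : ℕ, k₂ ≤ m → b ^ (m + 1) * d = b ^ m := by
    intro m hm
    induction m, hm using Nat.le_induction with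
    | base => exact hd2
    | succ m hm ih =>
      rw [pow_succ' b (m + 1), mul_assoc, ih, ← pow_succ']
  refine ⟨?_, ?_, ?_⟩
  · intro t
    rw [hkey, add_mul, mul_add, hcc t, hdc t]
  · rw [hkey, add_mul, mul_add, mul_add, hc1, hd1, mul_assoc c a d, had, mul_zero,
      add_zero, mul_assoc d b c, hbc, mul_zero, zero_add]
  · have hk1m : k₁ ≤ max k₁ k₂ := le_max_left _ _
    have hk2m : k₂ ≤ max k₁ k₂ := le_max_right _ _
    have hm1 : 1 ≤ max k₁ k₂ := le_trans hk₁ hk1m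
    obtain ⟨n, hn⟩ : ∃ n, max k₁ k₂ = n + 1 := ⟨max k₁ k₂ - 1, by omega⟩
    rw [hn] at hk1m hk2m ⊢
    have haz : a ^ (n + 1 + 1) * d = 0 := by
      rw [pow_succ, mul_assoc, had, mul_zero]
    have hbz : b ^ (n + 1 + 1) * c = 0 := by
      rw [pow_succ, mul_assoc, hbc, mul_zero]
    rw [hsum (n + 1), hsum n, add_mul, mul_add, mul_add, hextc _ hk1m, hextd _ hk2m,
      haz, hbz, add_zero, zero_add]
end

section
/- Let R be a proper *-ring and let a, b ∈ R with a*b = 0, b*a = 0, and (a)* * b = 0 (where (a)* is the involution of a). If x is a central weak core inverse of a with index at most k₁ and y is a central weak core inverse of b with index at most k₂ (k₁, k₂ ≥ 1), then x + y is a central weak core inverse of a + b with index at most max(k₁, k₂). -/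
/-- additivity of the central weak core inverse. -/
theorem stmt_19 {R : Type*} [Ring R] [StarRing R]
    (hProper : ∀ r : R, star r * r = 0 → r = 0)
    (a b x y : R) (k₁ k₂ : ℕ) (hk₁ : 1 ≤ k₁) (hk₂ : 1 ≤ k₂)
    (hab : a * b = 0) (hba : b * a = 0) (hsab : star a * b = 0)
    (hxc : ∀ t : R, (a * x) * t = t * (a * x))
    (hx1 : x * a ^ (k₁ + 1) = a ^ k₁) (hx2 : x * a * x = x)
    (hx3 : star (a * x) = a * x)
    (hyc : ∀ t : R, (b * y) * t = t * (b * y))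
    (hy1 : y * b ^ (k₂ + 1) = b ^ k₂) (hy2 : y * b * y = y)
    (hy3 : star (b * y) = b * y) :
    (∀ t : R, ((a + b) * (x + y)) * t = t * ((a + b) * (x + y))) ∧
    (x + y) * (a + b) ^ (max k₁ k₂ + 1) = (a + b) ^ max k₁ k₂ ∧
    (x + y) * (a + b) * (x + y) = x + y ∧
    star ((a + b) * (x + y)) = (a + b) * (x + y) := by
  -- star b * a = 0
  have hsba : star b * a = 0 := by
    have := congrArg star hsab
    simpa [star_mul] using this
  have hx2' : x * (a * x) = x := by rw [← mul_assoc]; exact hx2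
  have hy2' : y * (b * y) = y := by rw [← mul_assoc]; exact hy2
  -- (a*x)*b = 0
  have hpb : (a * x) * b = 0 := by
    calc (a * x) * b = star (a * x) * b := by rw [hx3]
      _ = star x * (star a * b) := by rw [star_mul, mul_assoc]
      _ = 0 := by rw [hsab, mul_zero]
  -- x*b = 0
  have hxb : x * b = 0 := by
    calc x * b = (x * a * x) * b := by rw [hx2]
      _ = x * ((a * x) * b) := by simp only [mul_assoc]
      _ = 0 := by rw [hpb, mul_zero]
  -- b*x = 0
  have hbx : b * x = 0 := by
    calc b * x = b * (x * (a * x)) := by rw [hx2']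
      _ = (b * x) * (a * x) := by rw [mul_assoc]
      _ = (a * x) * (b * x) := (hxc (b * x)).symm
      _ = ((a * x) * b) * x := by simp only [mul_assoc]
      _ = 0 := by rw [hpb, zero_mul]
  -- (b*y)*a = 0
  have hqa : (b * y) * a = 0 := by
    calc (b * y) * a = star (b * y) * a := by rw [hy3]
      _ = star y * (star b * a) := by rw [star_mul, mul_assoc]
      _ = 0 := by rw [hsba, mul_zero]
  -- y*a = 0
  have hya : y * a = 0 := by
    calc y * a = (y * b * y) * a := by rw [hy2]
      _ = y * ((b * y) * a) := by simp only [mul_assoc]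
      _ = 0 := by rw [hqa, mul_zero]
  -- a*y = 0
  have hay : a * y = 0 := by
    calc a * y = a * (y * (b * y)) := by rw [hy2']
      _ = (a * y) * (b * y) := by rw [mul_assoc]
      _ = (b * y) * (a * y) := (hyc (a * y)).symm
      _ = ((b * y) * a) * y := by simp only [mul_assoc]
      _ = 0 := by rw [hqa, zero_mul]
  -- p*q = 0 and q*p = 0
  have hpq : (a * x) * (b * y) = 0 := by
    calc (a * x) * (b * y) = ((a * x) * b) * y := by simp only [mul_assoc]
      _ = 0 := by rw [hpb, zero_mul]
  have hqp : (b * y) * (a * x) = 0 := by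
    rw [hyc (a * x)]; exact hpq
  -- cross products of x,y vanish
  have hxy : x * y = 0 := by
    have hpy : (a * x) * y = 0 := by
      calc (a * x) * y = y * (a * x) := hxc y
        _ = (y * (b * y)) * (a * x) := by rw [hy2']
        _ = y * ((b * y) * (a * x)) := by rw [mul_assoc]
        _ = 0 := by rw [hqp, mul_zero]
    calc x * y = (x * (a * x)) * y := by rw [hx2']
      _ = x * ((a * x) * y) := by rw [mul_assoc]
      _ = 0 := by rw [hpy, mul_zero]
  have hyx : y * x = 0 := by
    have hqx : (b * y) * x = 0 := by
      calc (b * y) * x = x * (b * y) := hyc x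
        _ = (x * b) * y := by rw [mul_assoc]
        _ = 0 := by rw [hxb, zero_mul]
    calc y * x = (y * (b * y)) * x := by rw [hy2']
      _ = y * ((b * y) * x) := by rw [mul_assoc]
      _ = 0 := by rw [hqx, mul_zero]
  -- product expansion
  have hprod : (a + b) * (x + y) = a * x + b * y := by
    rw [add_mul, mul_add, mul_add, hay, hbx]
    abel
  -- power formula
  have hpow : ∀ n : ℕ, (a + b) ^ (n + 1) = a ^ (n + 1) + b ^ (n + 1) := by
    intro n
    induction n with
    | zero => simp
    | succ n ih =>
      have h1 : a ^ (n + 1) * b = 0 := by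
        rw [pow_succ, mul_assoc, hab, mul_zero]
      have h2 : b ^ (n + 1) * a = 0 := by
        rw [pow_succ, mul_assoc, hba, mul_zero]
      calc (a + b) ^ (n + 2) = (a + b) ^ (n + 1) * (a + b) := by rw [pow_succ]
        _ = (a ^ (n + 1) + b ^ (n + 1)) * (a + b) := by rw [ih]
        _ = a ^ (n + 1) * a + (a ^ (n + 1) * b + (b ^ (n + 1) * a + b ^ (n + 1) * b)) := by
            rw [add_mul, mul_add, mul_add]; abel
        _ = a ^ (n + 2) + b ^ (n + 2) := by
            rw [h1, h2, ← pow_succ, ← pow_succ]; abel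
  set m := max k₁ k₂ with hm
  have hmk₁ : k₁ ≤ m := le_max_left _ _
  have hmk₂ : k₂ ≤ m := le_max_right _ _
  have hm1 : 1 ≤ m := le_trans hk₁ hmk₁
  -- x * a^(m+1) = a^m
  have hxam : x * a ^ (m + 1) = a ^ m := by
    have : m + 1 = (k₁ + 1) + (m - k₁) := by omega
    rw [this, pow_add, ← mul_assoc, hx1, ← pow_add]
    congr 1; omega
  have hybm : y * b ^ (m + 1) = b ^ m := by
    have : m + 1 = (k₂ + 1) + (m - k₂) := by omega
    rw [this, pow_add, ← mul_assoc, hy1, ← pow_add]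
    congr 1; omega
  have hxbm : x * b ^ (m + 1) = 0 := by
    rw [pow_succ', ← mul_assoc, hxb, zero_mul]
  have hyam : y * a ^ (m + 1) = 0 := by
    rw [pow_succ', ← mul_assoc, hya, zero_mul]
  refine ⟨?_, ?_, ?_, ?_⟩
  · intro t
    rw [hprod, add_mul, mul_add, hxc t, hyc t]
  · have hmm : (a + b) ^ (m + 1) = a ^ (m + 1) + b ^ (m + 1) := hpow m
    have hmm' : (a + b) ^ m = a ^ m + b ^ m := by
      obtain ⟨m', hm'⟩ : ∃ m', m = m' + 1 := ⟨m - 1, by omega⟩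
      rw [hm']; exact hpow m'
    rw [hmm, hmm', add_mul, mul_add, mul_add, hxam, hybm, hxbm, hyam]
    abel
  · have h1 : y * (a * x) = 0 := by rw [← mul_assoc, hya, zero_mul]
    have h2 : x * (b * y) = 0 := by rw [← mul_assoc, hxb, zero_mul]
    rw [mul_assoc, hprod, mul_add, add_mul, add_mul, h1, h2, hx2', hy2']
    abel
  · rw [hprod, star_add, hx3, hy3]
end
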